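/- arXiv:math/9811094 — 6 statements merged into one kernel-verified Lean document; each statement's English description precedes it below -/
import Mathlib

section
/- The map Φ : C(Γ̃_A, ℂ) → ℓ^∞(𝒢) defined by Φ(f)(j) = f(j, c_j) for j ∈ 𝒢 is an isometric unital *-algebra homomorphism (in particular injective) whose range is exactly R̃_A. Consequently, every function in R̃_A (viewed on the dense copy {(j,c_j) : j ∈ 𝒢} of 𝒢 in Γ̃_A) has a unique continuous extension to Γ̃_A, and R̃_A is isomorphic as a C*-algebra to C(Γ̃_A, ℂ). -/
open scoped BoundedContinuousFunction
open OnePoint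

noncomputable section

namespace CK

variable {G : Type*}

/-- The `i`-th row of `A` as a complex-valued function on `G`. -/
def rho (A : G → G → Bool) (i : G) : G → ℂ := fun j => if A i j then 1 else 0

/-- The `i`-th row of the identity matrix as a complex-valued function on `G`. -/
def del [DecidableEq G] (i : G) : G → ℂ := fun j => if j = i then 1 else 0

/-- The `j`-th column of `A` as an element of `{0,1}^G`. -/
def col (A : G → G → Bool) (j : G) : G → Bool := fun i => A i j

variable [TopologicalSpace G] [DiscreteTopology G]

/-- `rho A i` as an element of `ℓ^∞(G)`, realized as bounded (continuous) functions on the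
discrete space `G`. -/
def rhoB (A : G → G → Bool) (i : G) : G →ᵇ ℂ :=
  BoundedContinuousFunction.ofNormedAddCommGroupDiscrete (rho A i) 1
    (by intro j; simp only [rho]; split <;> simp)

/-- `del i` as an element of `ℓ^∞(G)`. -/
def delB [DecidableEq G] (i : G) : G →ᵇ ℂ :=
  BoundedContinuousFunction.ofNormedAddCommGroupDiscrete (del i) 1
    (by intro j; simp only [del]; split <;> simp)

/-- The space `Γ̃_A`: the closure of `{(j, c_j) : j ∈ G}` in `G̃ × {0,1}^G`. -/
def GammaT (A : G → G → Bool) : Set (OnePoint G × (G → Bool)) :=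
  closure {p | ∃ j : G, p = ((j : OnePoint G), col A j)}

instance GammaT.compactSpace (A : G → G → Bool) : CompactSpace (GammaT A) :=
  isCompact_iff_compactSpace.mp (isClosed_closure).isCompact

variable [DecidableEq G]

/-- The generators of `R_A`: the rows of `A` and of the identity matrix. -/
def gens (A : G → G → Bool) : Set (G →ᵇ ℂ) :=
  Set.range (rhoB A) ∪ Set.range (delB (G := G))

/-- `R_A`, the smallest closed *-subalgebra of `ℓ^∞(G)` containing the rows of `A` and of the
identity matrix: the closure of the non-unital star subalgebra generated by them. -/
def RA (A : G → G → Bool) : Set (G →ᵇ ℂ) :=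
  closure (NonUnitalStarAlgebra.adjoin ℂ (gens A) : Set (G →ᵇ ℂ))

/-- `R̃_A`, the smallest closed unital *-subalgebra of `ℓ^∞(G)` containing `R_A` and `1`. -/
def RtA (A : G → G → Bool) : StarSubalgebra ℂ (G →ᵇ ℂ) :=
  (StarAlgebra.adjoin ℂ (gens A)).topologicalClosure

/-- The restriction map `Φ : C(Γ̃_A, ℂ) → ℓ^∞(G)`, `Φ(f)(j) = f(j, c_j)`. -/
def Phi (A : G → G → Bool) (f : C(GammaT A, ℂ)) : G →ᵇ ℂ :=
  BoundedContinuousFunction.ofNormedAddCommGroupDiscrete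
    (fun j => f ⟨((j : OnePoint G), col A j), subset_closure ⟨j, rfl⟩⟩) ‖f‖
    (fun j => f.norm_coe_le_norm _)

end CK

/-! Evaluation at the dense points `(j, c_j)` is isometric on `C(Γ̃_A, ℂ)`, because a continuous
function attains its sup norm on any dense set. The functions `x ↦ [x₂(i) = 1]` and
`x ↦ [x₁ = i]` separate the points of `Γ̃_A ⊆ G̃ × {0,1}^G` (two points with equal first
coordinates differ in some coordinate of the second, and two distinct first coordinates cannot
both be `⋆`), so by Stone–Weierstrass they generate `C(Γ̃_A, ℂ)` as a C*-algebra. Their images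
under `Φ` are `ρ_i` and `δ_i`, and an isometric *-homomorphism out of a complete space maps
closures onto closures, so the range of `Φ` is the closed unital *-algebra generated by the
`ρ_i` and `δ_i`, which is `R̃_A`. -/

theorem ContinuousMap.norm_le_of_denseRange {X ι E : Type*} [TopologicalSpace X]
    [CompactSpace X] [SeminormedAddCommGroup E] {p : ι → X} (hp : DenseRange p) (f : C(X, E))
    {C : ℝ} (hC : 0 ≤ C) (h : ∀ i, ‖f (p i)‖ ≤ C) : ‖f‖ ≤ C :=
  (f.norm_le hC).2 fun x => hp.induction_on x (isClosed_le f.continuous.norm continuous_const) h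

theorem OnePoint.isClopen_singleton_coe {X : Type*} [TopologicalSpace X] [DiscreteTopology X]
    (x : X) : IsClopen {(x : OnePoint X)} :=
  ⟨isClosed_singleton, by
    rw [← Set.image_singleton]; exact OnePoint.isOpen_image_coe.2 (isOpen_discrete _)⟩

namespace CK

variable {G : Type*} [TopologicalSpace G] (A : G → G → Bool)

def toGammaT (j : G) : GammaT A := ⟨((j : OnePoint G), col A j), subset_closure ⟨j, rfl⟩⟩

theorem denseRange_toGammaT : DenseRange (toGammaT A) :=
  Subtype.dense_iff.2 <| closure_mono <| by
    rintro _ ⟨j, rfl⟩; exact ⟨toGammaT A j, ⟨j, rfl⟩, rfl⟩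

def rhoExt (i : G) : C(GammaT A, ℂ) :=
  ⟨fun x => if x.1.2 i then 1 else 0,
    (continuous_of_discreteTopology (f := fun b : Bool => if b then (1 : ℂ) else 0)).comp
      (by fun_prop)⟩

variable [DiscreteTopology G]

def delExt (i : G) : C(GammaT A, ℂ) :=
  ⟨{x : GammaT A | x.1.1 = (i : OnePoint G)}.indicator 1,
    ((OnePoint.isClopen_singleton_coe i).preimage
      (continuous_fst.comp continuous_subtype_val)).continuous_indicator continuous_const⟩

theorem delExt_apply (i : G) (x : GammaT A) :
    delExt A i x = {x : GammaT A | x.1.1 = (i : OnePoint G)}.indicator 1 x := rfl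

def gensExt : Set C(GammaT A, ℂ) := Set.range (rhoExt A) ∪ Set.range (delExt A)

theorem separatesPoints_gensExt : Set.SeparatesPoints ((⇑) '' gensExt A) := by
  rintro ⟨⟨a, c⟩, _⟩ ⟨⟨b, d⟩, _⟩ hxy
  by_cases hab : a = b
  · subst hab
    obtain ⟨i, hi⟩ := Function.ne_iff.1 fun hcd : c = d => hxy (by subst hcd; rfl)
    refine ⟨_, ⟨rhoExt A i, Or.inl ⟨i, rfl⟩, rfl⟩, ?_⟩
    show (if c i then (1 : ℂ) else 0) ≠ if d i then 1 else 0
    revert hi; cases c i <;> cases d i <;> simp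
  · obtain ⟨j, rfl | rfl⟩ : ∃ j : G, a = j ∨ b = j := by
      cases a with
      | infty => cases b with
        | infty => exact absurd rfl hab
        | coe j => exact ⟨j, .inr rfl⟩
      | coe j => exact ⟨j, .inl rfl⟩
    all_goals refine ⟨_, ⟨delExt A j, Or.inr ⟨j, rfl⟩, rfl⟩, ?_⟩
    · simp [delExt_apply, Ne.symm hab]
    · simp [delExt_apply, hab]

theorem topologicalClosure_adjoin_gensExt :
    (StarAlgebra.adjoin ℂ (gensExt A)).topologicalClosure = ⊤ :=
  ContinuousMap.starSubalgebra_topologicalClosure_eq_top_of_separatesPoints _ <|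
    Set.separatesPoints_mono (Set.image_mono (StarAlgebra.subset_adjoin ℂ _))
      (separatesPoints_gensExt A)

theorem Phi_apply (f : C(GammaT A, ℂ)) (j : G) : Phi A f j = f (toGammaT A j) := rfl

def PhiHom : C(GammaT A, ℂ) →⋆ₐ[ℂ] (G →ᵇ ℂ) where
  toFun := Phi A
  map_one' := rfl
  map_mul' _ _ := rfl
  map_zero' := rfl
  map_add' _ _ := rfl
  commutes' _ := rfl
  map_star' _ := rfl

theorem coe_PhiHom : ⇑(PhiHom A) = Phi A := rfl

theorem norm_Phi (f : C(GammaT A, ℂ)) : ‖Phi A f‖ = ‖f‖ :=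
  le_antisymm
    ((BoundedContinuousFunction.norm_le (norm_nonneg f)).2 fun _ => f.norm_coe_le_norm _)
    (f.norm_le_of_denseRange (denseRange_toGammaT A) (norm_nonneg _) (Phi A f).norm_coe_le_norm)

theorem isometry_Phi : Isometry (Phi A) :=
  AddMonoidHomClass.isometry_of_norm (PhiHom A) (norm_Phi A)

theorem Phi_rhoExt (i : G) : Phi A (rhoExt A i) = rhoB A i := by
  ext j; rfl

variable [DecidableEq G]

theorem Phi_delExt (i : G) : Phi A (delExt A i) = delB i := by
  ext j
  by_cases h : j = i <;> simp [Phi_apply, delExt_apply, toGammaT, delB, del, h]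

theorem image_gensExt : PhiHom A '' gensExt A = gens A := by
  simp only [gensExt, gens, Set.image_union, ← Set.range_comp, coe_PhiHom, Function.comp_def,
    Phi_rhoExt, Phi_delExt]

theorem range_Phi : Set.range (Phi A) = RtA A := by
  have hclosed : IsClosedMap (PhiHom A) := (isometry_Phi A).isClosedEmbedding.isClosedMap
  calc Set.range (Phi A)
      = ((⊤ : StarSubalgebra ℂ C(GammaT A, ℂ)).map (PhiHom A) : Set (G →ᵇ ℂ)) := by
        rw [← StarAlgHom.range_eq_map_top]; rfl
    _ = RtA A := by
      rw [← topologicalClosure_adjoin_gensExt,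
        ← StarSubalgebra.topologicalClosure_map _ _ hclosed (isometry_Phi A).continuous,
        StarAlgHom.map_adjoin, image_gensExt, RtA]

end CK

theorem stmt_0_general {G : Type*} [TopologicalSpace G] [DiscreteTopology G]
    [DecidableEq G] (A : G → G → Bool) :
    (∀ f g : C(CK.GammaT A, ℂ), CK.Phi A (f * g) = CK.Phi A f * CK.Phi A g) ∧
    (∀ f g : C(CK.GammaT A, ℂ), CK.Phi A (f + g) = CK.Phi A f + CK.Phi A g) ∧
    (∀ (c : ℂ) (f : C(CK.GammaT A, ℂ)), CK.Phi A (c • f) = c • CK.Phi A f) ∧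
    CK.Phi A 1 = 1 ∧
    (∀ f : C(CK.GammaT A, ℂ), CK.Phi A (star f) = star (CK.Phi A f)) ∧
    (∀ f : C(CK.GammaT A, ℂ), ‖CK.Phi A f‖ = ‖f‖) ∧
    Function.Injective (CK.Phi A) ∧
    Set.range (CK.Phi A) = (CK.RtA A : Set (G →ᵇ ℂ)) ∧
    (∀ g : G →ᵇ ℂ, g ∈ CK.RtA A →
      ∃! f : C(CK.GammaT A, ℂ), ∀ j : G,
        f ⟨((j : OnePoint G), CK.col A j), subset_closure ⟨j, rfl⟩⟩ = g j) := by
  have hinj := (CK.isometry_Phi A).injective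
  refine ⟨map_mul (CK.PhiHom A), map_add (CK.PhiHom A), map_smul (CK.PhiHom A),
    map_one (CK.PhiHom A), map_star (CK.PhiHom A), CK.norm_Phi A, hinj, CK.range_Phi A,
    fun g hg => ?_⟩
  obtain ⟨f, rfl⟩ : g ∈ Set.range (CK.Phi A) := (CK.range_Phi A).symm ▸ hg
  exact ⟨f, fun _ => rfl, fun f' hf' => hinj (BoundedContinuousFunction.ext hf')⟩

/-- The map `Φ : C(Γ̃_A, ℂ) → ℓ^∞(G)`, `Φ(f)(j) = f(j, c_j)`, is an isometric
unital *-algebra homomorphism (in particular injective) whose range is exactly `R̃_A`;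
consequently every function in `R̃_A` has a unique continuous extension to `Γ̃_A`, and
`R̃_A ≅ C(Γ̃_A, ℂ)`. -/
theorem stmt_0 {G : Type*} [Nonempty G] [TopologicalSpace G] [DiscreteTopology G]
    [DecidableEq G] (A : G → G → Bool) (hA : ∀ i : G, ∃ j : G, A i j = true) :
    (∀ f g : C(CK.GammaT A, ℂ), CK.Phi A (f * g) = CK.Phi A f * CK.Phi A g) ∧
    (∀ f g : C(CK.GammaT A, ℂ), CK.Phi A (f + g) = CK.Phi A f + CK.Phi A g) ∧
    (∀ (c : ℂ) (f : C(CK.GammaT A, ℂ)), CK.Phi A (c • f) = c • CK.Phi A f) ∧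
    CK.Phi A 1 = 1 ∧
    (∀ f : C(CK.GammaT A, ℂ), CK.Phi A (star f) = star (CK.Phi A f)) ∧
    (∀ f : C(CK.GammaT A, ℂ), ‖CK.Phi A f‖ = ‖f‖) ∧
    Function.Injective (CK.Phi A) ∧
    Set.range (CK.Phi A) = (CK.RtA A : Set (G →ᵇ ℂ)) ∧
    (∀ g : G →ᵇ ℂ, g ∈ CK.RtA A →
      ∃! f : C(CK.GammaT A, ℂ), ∀ j : G,
        f ⟨((j : OnePoint G), CK.col A j), subset_closure ⟨j, rfl⟩⟩ = g j) :=
  stmt_0_general A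
end
end

section
/- Assume 𝒢 is infinite and A is row-finite, i.e. every row ρ_i is finitely supported (for each i the set {j : A(i,j)=1} is finite). Then: (a) Γ̃_A = {(j, c_j) : j ∈ 𝒢} ∪ {(⋆, 𝟎)}, where 𝟎 is the identically zero element of {0,1}^𝒢; and (b) R_A equals the closure in ℓ^∞(𝒢) of the complex linear span of {δ_i : i ∈ 𝒢}, which is exactly the algebra c₀(𝒢) of functions on 𝒢 vanishing at infinity. -/
open scoped BoundedContinuousFunction
open OnePoint

noncomputable section

/-!
Over an isolated point `j` of `G̃` the only limit of the points `(j', c_j')` is `(j, c_j)`. Over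
`⋆`, row-finiteness gives, for each `i`, a cofinite set of `j` with `c_j(i) = 0`; hence the only
limit is `(⋆, 𝟎)`, and it is attained along the cofinite filter, which is proper because `G` is
infinite.

Row-finiteness also makes every generator of `R_A` finitely supported, so `R_A` lies in the
closed *-subalgebra `c₀(G)`. Conversely a function in `c₀(G)` is uniformly approximated by its
truncations to finite sets, which are finite linear combinations of the `δ_i`.
-/

open Filter Topology

namespace BoundedContinuousFunction

variable (α : Type*) [TopologicalSpace α]

def zeroAtInftySubalgebra : NonUnitalStarSubalgebra ℂ (α →ᵇ ℂ) where
  carrier := Set.range ZeroAtInftyContinuousMap.toBCF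
  add_mem' := by rintro _ _ ⟨f, rfl⟩ ⟨g, rfl⟩; exact ⟨f + g, rfl⟩
  zero_mem' := ⟨0, rfl⟩
  mul_mem' := by rintro _ _ ⟨f, rfl⟩ ⟨g, rfl⟩; exact ⟨f * g, rfl⟩
  smul_mem' := by rintro c _ ⟨f, rfl⟩; exact ⟨c • f, rfl⟩
  star_mem' := by rintro _ ⟨f, rfl⟩; exact ⟨star f, rfl⟩

variable {α}

theorem mem_zeroAtInftySubalgebra_iff {f : α →ᵇ ℂ} :
    f ∈ zeroAtInftySubalgebra α ↔ Tendsto f (cocompact α) (𝓝 0) :=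
  ⟨by rintro ⟨g, rfl⟩; exact g.zero_at_infty', fun h => ⟨⟨f.toContinuousMap, h⟩, rfl⟩⟩

theorem isClosed_zeroAtInftySubalgebra :
    IsClosed (zeroAtInftySubalgebra α : Set (α →ᵇ ℂ)) :=
  ZeroAtInftyContinuousMap.isClosed_range_toBCF

end BoundedContinuousFunction

namespace CK

open BoundedContinuousFunction

variable {G : Type*} [TopologicalSpace G] [DiscreteTopology G]

section GammaT

variable (A : G → G → Bool)

theorem col_eq_of_coe_mem_GammaT {j : G} {f : G → Bool}
    (h : ((j : OnePoint G), f) ∈ GammaT A) : f = col A j := by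
  have hclosed : IsClosed {p : OnePoint G × (G → Bool) | p.1 = j → p.2 = col A j} := by
    refine isClosed_imp ?_ (isClosed_eq continuous_snd continuous_const)
    have hj : IsOpen {(j : OnePoint G)} := by
      simpa using OnePoint.isOpen_image_coe.2 (isOpen_discrete {j})
    exact hj.preimage continuous_fst
  refine closure_minimal ?_ hclosed h rfl
  rintro _ ⟨j', rfl⟩ hj'
  rw [OnePoint.coe_eq_coe.1 hj']

theorem eq_false_of_infty_mem_GammaT (hrowfin : ∀ i : G, {j : G | A i j = true}.Finite)
    {f : G → Bool} (h : ((∞ : OnePoint G), f) ∈ GammaT A) : f = fun _ => false := by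
  funext i
  have hclosed : IsClosed {p : OnePoint G × (G → Bool) |
      p.2 i = true → p.1 ∈ ((↑) '' {j | A i j = true} : Set (OnePoint G))} := by
    refine isClosed_imp ?_ ((OnePoint.isClosed_image_coe.2
      ⟨isClosed_discrete _, (hrowfin i).isCompact⟩).preimage continuous_fst)
    exact (isOpen_discrete {true}).preimage ((continuous_apply (A := fun _ : G => Bool) i).comp
      continuous_snd)
  have hmem := closure_minimal (by rintro _ ⟨j, rfl⟩ hAij; exact ⟨j, hAij, rfl⟩) hclosed h
  simpa using mt hmem OnePoint.infty_notMem_image_coe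

theorem infty_mem_GammaT [Infinite G] (hrowfin : ∀ i : G, {j : G | A i j = true}.Finite) :
    ((∞ : OnePoint G), fun _ => false) ∈ GammaT A := by
  have hcoe : Tendsto ((↑) : G → OnePoint G) cofinite (𝓝 ∞) := by
    simpa [coclosedCompact_eq_cocompact, cocompact_eq_cofinite] using
      OnePoint.tendsto_coe_infty (X := G)
  have hcol : Tendsto (col A) cofinite (𝓝 fun _ => false) :=
    tendsto_pi_nhds.2 fun i => tendsto_nhds_of_eventually_eq <|
      (hrowfin i).eventually_cofinite_notMem.mono fun j hj => by simpa [col] using hj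
  exact mem_closure_of_tendsto (hcoe.prodMk_nhds hcol) (.of_forall fun j => ⟨j, rfl⟩)

theorem GammaT_eq [Infinite G] (hrowfin : ∀ i : G, {j : G | A i j = true}.Finite) :
    GammaT A =
      {p : OnePoint G × (G → Bool) | ∃ j : G, p = ((j : OnePoint G), col A j)} ∪
        {((∞ : OnePoint G), fun _ => false)} := by
  refine subset_antisymm ?_ (Set.union_subset subset_closure ?_)
  · rintro ⟨x | j, f⟩ h
    · exact Or.inr (by rw [eq_false_of_infty_mem_GammaT A hrowfin h]; rfl)
    · exact Or.inl ⟨j, by rw [col_eq_of_coe_mem_GammaT A h]; rfl⟩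
  · exact Set.singleton_subset_iff.2 (infty_mem_GammaT A hrowfin)

end GammaT

section RA

variable [DecidableEq G]

theorem delB_apply (i j : G) : delB (G := G) i j = if j = i then 1 else 0 := rfl

theorem sum_smul_delB_apply (s : Finset G) (f : G → ℂ) (k : G) :
    (∑ j ∈ s, f j • delB j) k = if k ∈ s then f k else 0 := by
  simp [BoundedContinuousFunction.sum_apply, delB_apply]

theorem gens_subset_zeroAtInftySubalgebra (A : G → G → Bool)
    (hrowfin : ∀ i : G, {j : G | A i j = true}.Finite) :
    gens A ⊆ zeroAtInftySubalgebra G := by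
  rintro _ (⟨i, rfl⟩ | ⟨i, rfl⟩) <;>
    refine mem_zeroAtInftySubalgebra_iff.2 <| cocompact_eq_cofinite G ▸
      tendsto_nhds_of_eventually_eq ?_
  · exact (hrowfin i).eventually_cofinite_notMem.mono fun j hj => by simpa [rhoB, rho] using hj
  · exact (eventually_cofinite_ne i).mono fun j hj => by simp [delB_apply, hj]

theorem RA_subset_zeroAtInftySubalgebra (A : G → G → Bool)
    (hrowfin : ∀ i : G, {j : G | A i j = true}.Finite) :
    RA A ⊆ zeroAtInftySubalgebra G :=
  closure_minimal (NonUnitalStarAlgebra.adjoin_le (gens_subset_zeroAtInftySubalgebra A hrowfin))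
    isClosed_zeroAtInftySubalgebra

theorem zeroAtInftySubalgebra_subset_closure_span_delB :
    (zeroAtInftySubalgebra G : Set (G →ᵇ ℂ)) ⊆
      closure (Submodule.span ℂ (Set.range (delB (G := G))) : Set (G →ᵇ ℂ)) := by
  intro f hf
  rw [Metric.mem_closure_iff]
  intro ε hε
  have hsmall : ∀ᶠ j in cofinite, ‖f j‖ < ε / 2 := by
    rw [← cocompact_eq_cofinite]
    exact (tendsto_zero_iff_norm_tendsto_zero.1 (mem_zeroAtInftySubalgebra_iff.1 hf))
      |>.eventually_lt_const (half_pos hε)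
  obtain ⟨s, hs⟩ := (eventually_cofinite.1 hsmall).exists_finset_coe
  refine ⟨∑ j ∈ s, f j • delB j,
    Submodule.sum_mem _ fun j _ => Submodule.smul_mem _ _ (Submodule.subset_span ⟨j, rfl⟩), ?_⟩
  refine ((dist_le (half_pos hε).le).2 fun k => ?_).trans_lt (half_lt_self hε)
  rw [sum_smul_delB_apply]
  split_ifs with hk
  · simp [(half_pos hε).le]
  · have hk' : ‖f k‖ < ε / 2 := not_not.1 fun h => hk (by rw [← Finset.mem_coe, hs]; exact h)
    simpa using hk'.le

theorem closure_span_delB_subset_RA (A : G → G → Bool) :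
    closure (Submodule.span ℂ (Set.range (delB (G := G))) : Set (G →ᵇ ℂ)) ⊆ RA A :=
  closure_mono <| Submodule.span_le (p := (NonUnitalStarAlgebra.adjoin ℂ (gens A)).toSubmodule).2
    (Set.subset_union_right.trans (NonUnitalStarAlgebra.subset_adjoin ℂ _))

end RA

end CK

theorem stmt_4_general {G : Type*} [Infinite G] [TopologicalSpace G] [DiscreteTopology G]
    [DecidableEq G] (A : G → G → Bool)
    (hrowfin : ∀ i : G, {j : G | A i j = true}.Finite) :
    CK.GammaT A =
      {p : OnePoint G × (G → Bool) | ∃ j : G, p = ((j : OnePoint G), CK.col A j)} ∪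
        {((∞ : OnePoint G), fun _ => false)} ∧
    CK.RA A = closure ((Submodule.span ℂ (Set.range (CK.delB (G := G)))) : Set (G →ᵇ ℂ)) ∧
    CK.RA A = {f : G →ᵇ ℂ | Filter.Tendsto (fun j => f j) Filter.cofinite (nhds 0)} := by
  have hRA := CK.RA_subset_zeroAtInftySubalgebra A hrowfin
  have hc₀ := CK.zeroAtInftySubalgebra_subset_closure_span_delB (G := G)
  have hspan := CK.closure_span_delB_subset_RA A
  refine ⟨CK.GammaT_eq A hrowfin, subset_antisymm (hRA.trans hc₀) hspan, ?_⟩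
  rw [subset_antisymm hRA (hc₀.trans hspan)]
  ext f
  simp [BoundedContinuousFunction.mem_zeroAtInftySubalgebra_iff, cocompact_eq_cofinite]

/-- For infinite `G` and row-finite `A`: (a) `Γ̃_A` consists of the points
`(j, c_j)` together with `(⋆, 𝟎)`; (b) `R_A` is the closed linear span of the `δ_i`, namely
the algebra `c₀(G)` of functions vanishing at infinity. -/
theorem stmt_4 {G : Type*} [Infinite G] [TopologicalSpace G] [DiscreteTopology G]
    [DecidableEq G] (A : G → G → Bool) (hA : ∀ i : G, ∃ j : G, A i j = true)
    (hrowfin : ∀ i : G, {j : G | A i j = true}.Finite) :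
    CK.GammaT A =
      {p : OnePoint G × (G → Bool) | ∃ j : G, p = ((j : OnePoint G), CK.col A j)} ∪
        {((∞ : OnePoint G), fun _ => false)} ∧
    CK.RA A = closure ((Submodule.span ℂ (Set.range (CK.delB (G := G)))) : Set (G →ᵇ ℂ)) ∧
    CK.RA A = {f : G →ᵇ ℂ | Filter.Tendsto (fun j => f j) Filter.cofinite (nhds 0)} :=
  stmt_4_general A hrowfin
end
end

section
/- The map π : Ω̃_A → 𝒢̃ × {0,1}^𝒢 defined by π(ξ) = (σ(ξ)₁, R_ξ(e)) is continuous, its range is exactly Γ̃_A, and moreover π maps Ω_A := Ω̃_A \ {{e}} (where {e} denotes the singleton subset of 𝔽 consisting of the identity) onto Γ_A := Γ̃_A \ {(⋆, 𝟎)}, where 𝟎 is the identically zero element of {0,1}^𝒢. -/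
open OnePoint

noncomputable section

namespace CKO

variable {G : Type*}

/-- The submonoid `𝔽⁺` of the free group generated by the generators. -/
def pos (G : Type*) : Submonoid (FreeGroup G) :=
  Submonoid.closure (Set.range (FreeGroup.of : G → FreeGroup G))

/-- The defining relations of `Ω_A^τ` for a subset `ξ ⊆ 𝔽`, identified with a point of
`{0,1}^𝔽`: (a) `e ∈ ξ` and `ξ` contains every initial subword (prefix of the reduced word) of
each of its elements; (b) each `ω ∈ ξ` has at most one `y ∈ G` with `ωy ∈ ξ`; (c) if
`ω, ωy ∈ ξ` then `ωx⁻¹ ∈ ξ ↔ A(x,y) = 1`. -/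
def IsCK [DecidableEq G] (A : G → G → Bool) (ξ : FreeGroup G → Bool) : Prop :=
  ξ 1 = true ∧
  (∀ ω : FreeGroup G, ξ ω = true → ∀ p : List (G × Bool), p <+: ω.toWord →
    ξ (FreeGroup.mk p) = true) ∧
  (∀ ω : FreeGroup G, ξ ω = true → ∀ y z : G,
    ξ (ω * FreeGroup.of y) = true → ξ (ω * FreeGroup.of z) = true → y = z) ∧
  (∀ ω : FreeGroup G, ξ ω = true → ∀ y : G, ξ (ω * FreeGroup.of y) = true →
    ∀ x : G, (ξ (ω * (FreeGroup.of x)⁻¹) = true ↔ A x y = true))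

/-- `ξ` is unbounded: it has no upper bound in `𝔽` for the left order `s ≤ t ↔ s⁻¹t ∈ 𝔽⁺`. -/
def Unbounded (ξ : FreeGroup G → Bool) : Prop :=
  ¬ ∃ t : FreeGroup G, ∀ s : FreeGroup G, ξ s = true → s⁻¹ * t ∈ pos G

/-- `Ω̃_A`: the closure in `{0,1}^𝔽` of the set of unbounded elements of `Ω_A^τ`. -/
def OmegaT [DecidableEq G] (A : G → G → Bool) : Set (FreeGroup G → Bool) :=
  closure {ξ | IsCK A ξ ∧ Unbounded ξ}

end CKO

namespace CKO

open scoped Classical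

/-- The `j`-th column of `A` as an element of `{0,1}^G`. -/
def col {G : Type*} (A : G → G → Bool) (j : G) : G → Bool := fun i => A i j

/-- The space `Γ̃_A`: the closure of `{(j, c_j) : j ∈ G}` in `G̃ × {0,1}^G`. -/
def GammaT {G : Type*} [TopologicalSpace G] (A : G → G → Bool) :
    Set (OnePoint G × (G → Bool)) :=
  closure {p | ∃ j : G, p = ((j : OnePoint G), col A j)}

/-- The initial letter `σ(ξ)₁` of the stem of `ξ`: the unique element of `ξ ∩ G` when
`ξ ∩ G ≠ ∅` (for `ξ ∈ Ω̃_A` there is at most one such element), and `⋆` otherwise. -/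
def sigma1 {G : Type*} (ξ : FreeGroup G → Bool) : OnePoint G :=
  if h : ∃ x : G, ξ (FreeGroup.of x) = true then (h.choose : OnePoint G) else ∞

/-- The characteristic function of the singleton `{e} ⊆ 𝔽`. -/
def chiE {G : Type*} : FreeGroup G → Bool := fun ω => if ω = 1 then true else false

/-- The map `π(ξ) = (σ(ξ)₁, R_ξ(e))` on `Ω̃_A`. -/
def piMap {G : Type*} [DecidableEq G] (A : G → G → Bool) :
    OmegaT A → OnePoint G × (G → Bool) :=
  fun ξ => (sigma1 ξ.1, fun x => ξ.1 ((FreeGroup.of x)⁻¹))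

end CKO

/-!
On an element `ξ` of `Ω_A^τ`, conditions (b) and (c) at `e` say that `ξ ∩ 𝒢` has at most one
element `j`, and that then `R_ξ(e) = c_j`; so `π ξ = (j, c_j)`, and `σ(·)₁` is continuous because
each `ξ ↦ ξ(x)` is. An unbounded `ξ` does contain some `j`: otherwise every reduced word in `ξ`
is negative and `e` bounds `ξ`. Since the unbounded elements are dense in `Ω̃_A`, continuity gives
`range π ⊆ Γ̃_A`. Conversely `Ω̃_A` is compact, so `range π` is closed, and `(j, c_j)` is the image
of the unbounded element grown along an infinite `A`-path `j = y₀ → y₁ → ⋯` (which exists since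
`A` has no zero row): the stem `y₀ y₁ ⋯` together with all negative tails `x₁⁻¹ x₂⁻¹ ⋯ x_m⁻¹`
hanging at its `k`-th vertex with `A(x₁, y_k) = A(x_{i+1}, x_i) = 1`. We describe this tree by an
automaton reading reduced words. Finally `π ξ = (⋆, 𝟎)` leaves `ξ` no word of length one, so
`ξ = {e}`.
-/

namespace CKO

open FreeGroup Filter Topology

section Words

variable {G : Type*}

theorem inv_of_eq_mk (a : G) : (of a)⁻¹ = mk [(a, false)] := inv_mk

theorem mk_mem_pos {w : List (G × Bool)} (h : ∀ l ∈ w, l.2 = true) : mk w ∈ pos G := by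
  induction w with
  | nil => exact one_mem _
  | cons l t ih =>
    obtain ⟨a, b⟩ := l
    obtain rfl : b = true := h _ List.mem_cons_self
    rw [← List.singleton_append, ← mul_mk]
    exact mul_mem (Submonoid.subset_closure ⟨a, rfl⟩)
      (ih fun l hl => h l (List.mem_cons_of_mem _ hl))

def expSum : FreeGroup G →* Multiplicative ℤ := FreeGroup.lift fun _ => Multiplicative.ofAdd 1

theorem expSum_nonneg {u : FreeGroup G} (hu : u ∈ pos G) : 0 ≤ (expSum u).toAdd := by
  induction hu using Submonoid.closure_induction with
  | mem x hx => obtain ⟨a, rfl⟩ := hx; simp [expSum]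
  | one => simp
  | mul x y _ _ hx hy => simpa using add_nonneg hx hy

theorem unbounded_of_expSum (ξ : FreeGroup G → Bool)
    (h : ∀ n : ℕ, ∃ s, ξ s = true ∧ (n : ℤ) ≤ (expSum s).toAdd) : Unbounded ξ := by
  rintro ⟨t, ht⟩
  obtain ⟨s, hs, hn⟩ := h ((expSum t).toAdd.toNat + 1)
  have hst : (expSum t).toAdd = (expSum s).toAdd + (expSum (s⁻¹ * t)).toAdd := by
    simp
  have := expSum_nonneg (ht s hs)
  omega

variable [DecidableEq G]

theorem inv_mem_pos {ω : FreeGroup G} (h : ∀ l ∈ ω.toWord, l.2 = false) :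
    ω⁻¹ ∈ pos G := by
  rw [← mk_toWord (x := ω), inv_mk]
  refine mk_mem_pos fun l hl => ?_
  simp only [invRev, List.mem_reverse, List.mem_map] at hl
  obtain ⟨l, hl', rfl⟩ := hl
  simp [h l hl']

theorem toWord_mul_mk_singleton (ω : FreeGroup G) (l : G × Bool) :
    (ω * mk [l]).toWord = if ω.toWord.getLast? = Option.some (l.1, !l.2)
      then ω.toWord.dropLast else ω.toWord ++ [l] := by
  rw [toWord_mul, toWord_mk, reduce_singleton]
  split_ifs with h
  · obtain ⟨d, hd⟩ := List.getLast?_eq_some_iff.mp h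
    have hdr : IsReduced d := (isReduced_toWord (x := ω)).infix ⟨[], [(l.1, !l.2)], by simp [hd]⟩
    rw [hd, List.dropLast_concat, List.append_assoc, List.singleton_append,
      reduce.Step.eq Red.Step.not_rev, List.append_nil, hdr.reduce_eq]
  · refine IsReduced.reduce_eq (List.IsChain.append isReduced_toWord (List.isChain_singleton l) ?_)
    rintro a ha b hb hab
    obtain rfl : b = l := by simpa using hb.symm
    rcases a with ⟨a₁, a₂⟩
    rcases b with ⟨b₁, b₂⟩
    cases a₂ <;> cases b₂ <;> simp_all

end Words

section Automaton

variable {G σ : Type*} (step : σ → G × Bool → Option σ) (s₀ : σ)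

def run (w : List (G × Bool)) : Option σ := w.foldlM step s₀

def accepted [DecidableEq G] (ω : FreeGroup G) : Bool := (run step s₀ ω.toWord).isSome

variable {step s₀}

theorem run_append (w v : List (G × Bool)) :
    run step s₀ (w ++ v) = (run step s₀ w).bind fun s => run step s v := by
  simp only [run, List.foldlM_append]
  rfl

theorem run_append_singleton (w : List (G × Bool)) (l : G × Bool) :
    run step s₀ (w ++ [l]) = (run step s₀ w).bind (step · l) := by
  rw [run_append]
  congr 1
  funext s
  simp [run]

theorem run_isSome_of_prefix {p w : List (G × Bool)} (hp : p <+: w)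
    (hw : (run step s₀ w).isSome) : (run step s₀ p).isSome := by
  obtain ⟨t, rfl⟩ := hp
  rw [run_append] at hw
  exact Option.isSome_of_isSome_bind hw

variable [DecidableEq G]

theorem accepted_one : accepted step s₀ 1 = true := rfl

theorem accepted_mk_of_prefix {ω : FreeGroup G} (hω : accepted step s₀ ω = true)
    {p : List (G × Bool)} (hp : p <+: ω.toWord) : accepted step s₀ (mk p) = true := by
  have hpr : IsReduced p := isReduced_toWord.infix hp.isInfix
  rw [accepted, toWord_mk, hpr.reduce_eq]
  exact run_isSome_of_prefix hp hω

theorem run_toWord_mul_mk_singleton {ω : FreeGroup G} {l : G × Bool}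
    (hl : ω.toWord.getLast? ≠ Option.some (l.1, !l.2)) :
    run step s₀ (ω * mk [l]).toWord = (run step s₀ ω.toWord).bind (step · l) := by
  rw [toWord_mul_mk_singleton, if_neg hl, run_append_singleton]

/-- A neighbour `ω l` of an accepted `ω` is accepted iff it is its parent in the Cayley tree
or the automaton can read `l`. -/
theorem accepted_mul_mk_singleton_iff {ω : FreeGroup G} {s : σ}
    (hs : run step s₀ ω.toWord = Option.some s) (l : G × Bool) :
    accepted step s₀ (ω * mk [l]) = true ↔
      ω.toWord.getLast? = Option.some (l.1, !l.2) ∨ (step s l).isSome := by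
  have hω : accepted step s₀ ω = true := by simp [accepted, hs]
  by_cases hl : ω.toWord.getLast? = Option.some (l.1, !l.2)
  · have hparent := accepted_mk_of_prefix hω (List.dropLast_prefix ω.toWord)
    rw [← mk_toWord (x := ω * mk [l]), toWord_mul_mk_singleton, if_pos hl]
    simp [hl, hparent]
  · simp [accepted, run_toWord_mul_mk_singleton hl, hs, hl]

end Automaton

section PathSet

/-- States of the automaton accepting the tree grown along the path `y`: reading the stem
`y 0 ⋯ y (k-1)`, or a negative tail ending in `c⁻¹`. -/
inductive PathState (G : Type*)
  | stem : ℕ → PathState G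
  | tail : G → PathState G

namespace PathState

variable {G : Type*} (y : ℕ → G)

/-- The unique `x ∈ G` such that the element `ω` reached in this state has `ω x` in the tree. -/
def next : PathState G → G
  | stem k => y k
  | tail c => c

def last : PathState G → Option (G × Bool)
  | stem 0 => none
  | stem (k + 1) => Option.some (y k, true)
  | tail c => Option.some (c, false)

end PathState

open PathState

variable {G : Type*} (A : G → G → Bool) (y : ℕ → G)

def stemElt : ℕ → FreeGroup G
  | 0 => 1
  | n + 1 => stemElt n * of (y n)

theorem expSum_stemElt (n : ℕ) : (expSum (stemElt y n)).toAdd = n := by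
  induction n with
  | zero => rfl
  | succ n ih =>
    rw [stemElt, _root_.map_mul, toAdd_mul, ih]
    simp [expSum]

variable {A} in
theorem exists_path (hA : ∀ i, ∃ j, A i j = true) (j : G) :
    ∃ y : ℕ → G, y 0 = j ∧ ∀ n, A (y n) (y (n + 1)) = true := by
  choose f hf using hA
  exact ⟨fun n => f^[n] j, rfl, fun n => by simpa [Function.iterate_succ_apply'] using hf _⟩

variable [DecidableEq G]

def pathStep : PathState G → G × Bool → Option (PathState G)
  | stem k, (x, true) => if x = y k then Option.some (stem (k + 1)) else none
  | tail _, (_, true) => none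
  | s, (x, false) => if A x (s.next y) then Option.some (tail x) else none

def pathSet : FreeGroup G → Bool := accepted (pathStep A y) (stem 0)

variable {A y}

theorem last_of_pathStep {s s' : PathState G} {l : G × Bool}
    (h : pathStep A y s l = Option.some s') : s'.last y = Option.some l := by
  rcases l with ⟨x, _ | _⟩ <;> rcases s with _ | _ <;>
    simp only [pathStep, Option.ite_none_right_eq_some, Option.some.injEq] at h <;>
    obtain ⟨h, rfl⟩ := h <;> simp [last, h]

theorem getLast?_of_run_pathStep {w : List (G × Bool)} {s : PathState G}
    (h : run (pathStep A y) (stem 0) w = Option.some s) : w.getLast? = s.last y := by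
  induction w using List.reverseRecOn generalizing s with
  | nil => cases h; rfl
  | append_singleton w l _ =>
    rw [run_append_singleton, Option.bind_eq_some_iff] at h
    obtain ⟨_, _, hs⟩ := h
    rw [List.getLast?_concat, last_of_pathStep hs]

theorem eq_next_of_pathStep {s : PathState G} {c : G}
    (h : s.last y = Option.some (c, false) ∨ (pathStep A y s (c, true)).isSome) :
    c = s.next y := by
  rcases s with (_ | k) | d <;> simp_all [last, pathStep, next]

theorem pathStep_neg_iff (hy : ∀ n, A (y n) (y (n + 1)) = true) (s : PathState G) (x : G) :
    s.last y = Option.some (x, true) ∨ (pathStep A y s (x, false)).isSome ↔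
      A x (s.next y) = true := by
  rcases s with (_ | k) | d <;> simp only [last, pathStep, next] <;> split_ifs with hA <;> simp_all
  rintro rfl
  simp [hy] at hA

theorem isCK_pathSet (hy : ∀ n, A (y n) (y (n + 1)) = true) : IsCK A (pathSet A y) := by
  have next_eq : ∀ ω s, run (pathStep A y) (stem 0) ω.toWord = Option.some s →
      ∀ c, pathSet A y (ω * of c) = true → c = s.next y := fun ω s hs c hc =>
    eq_next_of_pathStep <| by
      rwa [pathSet, of, accepted_mul_mk_singleton_iff hs, getLast?_of_run_pathStep hs] at hc
  refine ⟨accepted_one, fun ω hω p hp => accepted_mk_of_prefix hω hp, ?_, ?_⟩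
  · intro ω hω c d hc hd
    obtain ⟨s, hs⟩ := Option.isSome_iff_exists.mp hω
    rw [next_eq ω s hs c hc, next_eq ω s hs d hd]
  · intro ω hω c hc x
    obtain ⟨s, hs⟩ := Option.isSome_iff_exists.mp hω
    rw [next_eq ω s hs c hc, ← pathStep_neg_iff hy, ← getLast?_of_run_pathStep hs,
      pathSet, inv_of_eq_mk, accepted_mul_mk_singleton_iff hs]
    rfl

theorem run_toWord_stemElt (n : ℕ) :
    run (pathStep A y) (stem 0) (stemElt y n).toWord = Option.some (stem n) := by
  induction n with
  | zero => rfl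
  | succ n ih =>
    have hlast : (stemElt y n).toWord.getLast? ≠ Option.some (y n, false) := by
      rw [getLast?_of_run_pathStep ih]
      cases n <;> simp [last]
    rw [stemElt, of, run_toWord_mul_mk_singleton hlast, ih]
    simp [pathStep]

theorem pathSet_stemElt (n : ℕ) : pathSet A y (stemElt y n) = true := by
  simp [pathSet, accepted, run_toWord_stemElt]

theorem unbounded_pathSet : Unbounded (pathSet A y) :=
  unbounded_of_expSum _ fun n => ⟨stemElt y n, pathSet_stemElt n, (expSum_stemElt y n).ge⟩

theorem pathSet_of_zero : pathSet A y (of (y 0)) = true := by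
  simpa [stemElt] using pathSet_stemElt (A := A) (y := y) 1

end PathSet

section CKSets

variable {G : Type*} [DecidableEq G] {A : G → G → Bool}

theorem isClosed_setOf_isCK (A : G → G → Bool) :
    IsClosed {ξ : FreeGroup G → Bool | IsCK A ξ} := by
  have hclosed : ∀ ω b, IsClosed {ξ : FreeGroup G → Bool | ξ ω = b} := fun ω _ =>
    isClosed_eq (continuous_apply ω) continuous_const
  simp only [IsCK, Bool.coe_iff_coe, imp_iff_not_or, Bool.not_eq_true, Set.ofPred_and,
    Set.ofPred_or, Set.ofPred_forall]
  repeat' first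
    | intro _
    | exact hclosed _ _
    | exact isClosed_const
    | apply IsClosed.inter
    | apply IsClosed.union
    | apply isClosed_iInter

theorem isCK_of_mem_omegaT {ξ : FreeGroup G → Bool} (hξ : ξ ∈ OmegaT A) : IsCK A ξ :=
  closure_minimal (fun _ h => h.1) (isClosed_setOf_isCK A) hξ

namespace IsCK

variable {ξ : FreeGroup G → Bool} (h : IsCK A ξ)
include h

theorem eq_of_of {x y : G} (hx : ξ (of x) = true) (hy : ξ (of y) = true) : x = y :=
  h.2.2.1 1 h.1 x y (by rwa [one_mul]) (by rwa [one_mul])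

theorem inv_of_eq {j : G} (hj : ξ (of j) = true) (x : G) : ξ (of x)⁻¹ = A x j :=
  Bool.coe_iff_coe.mp (by simpa using h.2.2.2 1 h.1 j (by rwa [one_mul]) x)

theorem mk_of_prefix {w p : List (G × Bool)} (hred : IsReduced w) (hw : ξ (mk w) = true)
    (hp : p <+: w) : ξ (mk p) = true :=
  h.2.1 _ hw p (by rwa [toWord_mk, hred.reduce_eq])

/-- A positive letter `c` right after a negative one `x⁻¹` would give `ω x⁻¹` the two positive
neighbours `ω x⁻¹ c` and `ω`, so (b) forces `c = x`, which reducedness forbids. -/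
theorem snd_eq_false_of_isReduced (hno : ∀ x, ξ (of x) = false) {w : List (G × Bool)}
    (hred : IsReduced w) (hw : ξ (mk w) = true) : ∀ l ∈ w, l.2 = false := by
  induction w using List.reverseRecOn with
  | nil => simp
  | append_singleton w l ih =>
    have hwr : IsReduced w := hred.infix (List.prefix_append _ _).isInfix
    have hw' : ξ (mk w) = true := h.mk_of_prefix hred hw (List.prefix_append _ _)
    have hneg := ih hwr hw'
    refine List.forall_mem_append.mpr ⟨hneg, List.forall_mem_singleton.mpr ?_⟩
    obtain ⟨c, _ | _⟩ := l
    · rfl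
    · exfalso
      rcases List.eq_nil_or_concat' w with rfl | ⟨w, ⟨a, b⟩, rfl⟩
      · exact Bool.false_ne_true ((hno c).symm.trans hw)
      · obtain rfl : b = false := hneg (a, b) (by simp)
        have hca : c ≠ a := by
          have := hred.infix ⟨w, [], by simp⟩ (L₁ := [(a, false), (c, true)])
          simp only [isReduced_cons_cons] at this
          exact fun hca => by simpa using this.1 hca.symm
        have hc : ξ (mk (w ++ [(a, false)]) * of c) = true := by rwa [of, mul_mk]
        have ha : ξ (mk (w ++ [(a, false)]) * of a) = true := by
          rw [← mul_mk, ← inv_of_eq_mk, inv_mul_cancel_right]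
          exact h.mk_of_prefix hwr hw' (List.prefix_append _ _)
        exact hca (h.2.2.1 _ hw' c a hc ha)

theorem exists_of_unbounded (hu : Unbounded ξ) : ∃ j, ξ (of j) = true := by
  by_contra! hno
  simp only [ne_eq, Bool.not_eq_true] at hno
  refine hu ⟨1, fun s hs => ?_⟩
  rw [mul_one]
  exact inv_mem_pos (h.snd_eq_false_of_isReduced hno isReduced_toWord (by rwa [mk_toWord]))

theorem eq_chiE (hno : ∀ x, ξ (of x) = false) (hinv : ∀ x, ξ (of x)⁻¹ = false) : ξ = chiE := by
  funext ω
  by_cases hω : ω = 1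
  · simp [chiE, hω, h.1]
  · rw [chiE, if_neg hω, Bool.eq_false_iff]
    intro hξω
    obtain ⟨⟨a, b⟩, t, ht⟩ := List.exists_cons_of_ne_nil (mt toWord_eq_nil_iff.mp hω)
    have := h.2.1 ω hξω [(a, b)] (by rw [ht]; exact ⟨t, rfl⟩)
    cases b
    · rw [← inv_of_eq_mk, hinv] at this
      exact Bool.false_ne_true this
    · exact Bool.false_ne_true ((hno a).symm.trans this)

end IsCK

end CKSets

section Sigma

variable {G : Type*} {ξ : FreeGroup G → Bool}

theorem sigma1_eq_coe (huniq : ∀ x y, ξ (of x) = true → ξ (of y) = true → x = y) {j : G}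
    (hj : ξ (of j) = true) : sigma1 ξ = j := by
  have hex : ∃ x, ξ (of x) = true := ⟨j, hj⟩
  rw [sigma1, dif_pos hex, huniq _ _ hex.choose_spec hj]

theorem sigma1_eq_infty_iff : sigma1 ξ = ∞ ↔ ∀ x, ξ (of x) = false := by
  simp only [sigma1]
  split_ifs with hex
  · simpa using hex
  · simpa using hex

theorem continuousOn_sigma1 [TopologicalSpace G] [DiscreteTopology G] :
    ContinuousOn sigma1
      {ξ : FreeGroup G → Bool | ∀ x y, ξ (of x) = true → ξ (of y) = true → x = y} := by
  intro ξ hξ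
  have hopen : ∀ x b, IsOpen {η : FreeGroup G → Bool | η (of x) = b} := fun x b =>
    (continuous_apply (of x) : Continuous fun η : FreeGroup G → Bool => η (of x)).isOpen_preimage
      {b} (isOpen_discrete _)
  by_cases hex : ∃ j, ξ (of j) = true
  · obtain ⟨j, hj⟩ := hex
    refine tendsto_const_nhds.congr' ?_
    filter_upwards [self_mem_nhdsWithin, mem_nhdsWithin_of_mem_nhds ((hopen j true).mem_nhds hj)]
      with η hηU hηj
    rw [sigma1_eq_coe hξ hj, sigma1_eq_coe hηU hηj]
  · have hno : ∀ x, ξ (of x) = false := by simpa using hex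
    show Tendsto _ _ _
    rw [sigma1_eq_infty_iff.mpr hno, OnePoint.hasBasis_nhds_infty.tendsto_right_iff]
    rintro K ⟨-, hK⟩
    have hoff : ∀ᶠ η in 𝓝 ξ, ∀ x ∈ K, η (of x) = false :=
      hK.finite_of_discrete.eventually_all.mpr fun x _ => (hopen x false).mem_nhds (hno x)
    filter_upwards [self_mem_nhdsWithin, mem_nhdsWithin_of_mem_nhds hoff] with η hηU hηK
    by_cases hηex : ∃ x, η (of x) = true
    · obtain ⟨x, hx⟩ := hηex
      refine Or.inl ⟨x, fun hxK => ?_, (sigma1_eq_coe hηU hx).symm⟩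
      simp [hηK x hxK] at hx
    · exact Or.inr (sigma1_eq_infty_iff.mpr (by simpa using hηex))

end Sigma

section PiMap

variable {G : Type*} [DecidableEq G] {A : G → G → Bool}

theorem continuous_piMap [TopologicalSpace G] [DiscreteTopology G] (A : G → G → Bool) :
    Continuous (piMap A) :=
  (continuousOn_sigma1.comp_continuous continuous_subtype_val fun ξ _ _ =>
      (isCK_of_mem_omegaT ξ.2).eq_of_of).prodMk
    (continuous_pi fun _ => (continuous_apply _).comp continuous_subtype_val)

theorem piMap_eq_of_of {ξ : OmegaT A} {j : G} (hj : ξ.1 (of j) = true) :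
    piMap A ξ = ((j : OnePoint G), col A j) := by
  have h := isCK_of_mem_omegaT ξ.2
  simp only [piMap, sigma1_eq_coe (fun _ _ => h.eq_of_of) hj, Prod.mk.injEq, true_and]
  exact funext (h.inv_of_eq hj)

theorem piMap_eq_infty_iff {ξ : OmegaT A} :
    piMap A ξ = (∞, fun _ => false) ↔ ξ.1 = chiE := by
  have h := isCK_of_mem_omegaT ξ.2
  constructor
  · intro hπ
    rw [piMap, Prod.mk.injEq, sigma1_eq_infty_iff] at hπ
    exact h.eq_chiE hπ.1 (congrFun hπ.2)
  · intro hξ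
    rw [piMap, hξ, Prod.mk.injEq, sigma1_eq_infty_iff]
    simp [chiE, of_ne_one]

theorem range_piMap [TopologicalSpace G] [DiscreteTopology G]
    (hA : ∀ i, ∃ j, A i j = true) : Set.range (piMap A) = GammaT A := by
  set S := {ξ : FreeGroup G → Bool | IsCK A ξ ∧ Unbounded ξ}
  apply subset_antisymm
  · rintro _ ⟨ξ, rfl⟩
    have hdense : ξ ∈ closure (Subtype.val ⁻¹' S : Set (OmegaT A)) := by
      have hS : OmegaT A ∩ S = S := Set.inter_eq_right.mpr subset_closure
      rw [closure_subtype, Subtype.image_preimage_coe, hS]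
      exact ξ.2
    refine map_mem_closure (continuous_piMap A) hdense fun η hη => ?_
    obtain ⟨j, hj⟩ := hη.1.exists_of_unbounded hη.2
    exact ⟨j, piMap_eq_of_of hj⟩
  · have : CompactSpace (OmegaT A) := isCompact_iff_compactSpace.mp isClosed_closure.isCompact
    refine closure_minimal ?_ (isCompact_range (continuous_piMap A)).isClosed
    rintro _ ⟨j, rfl⟩
    obtain ⟨y, rfl, hy⟩ := exists_path hA j
    refine ⟨⟨pathSet A y, subset_closure ⟨isCK_pathSet hy, unbounded_pathSet⟩⟩, piMap_eq_of_of ?_⟩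
    exact pathSet_of_zero

end PiMap

end CKO

theorem stmt_5_general {G : Type*} [DecidableEq G]
    [TopologicalSpace G] [DiscreteTopology G]
    (A : G → G → Bool) (hA : ∀ i : G, ∃ j : G, A i j = true) :
    Continuous (CKO.piMap A) ∧
    Set.range (CKO.piMap A) = CKO.GammaT A ∧
    CKO.piMap A '' {ξ : CKO.OmegaT A | (ξ : FreeGroup G → Bool) ≠ CKO.chiE} =
      CKO.GammaT A \ {((∞ : OnePoint G), fun _ => false)} := by
  refine ⟨CKO.continuous_piMap A, CKO.range_piMap hA, ?_⟩
  have hOmega : {ξ : CKO.OmegaT A | (ξ : FreeGroup G → Bool) ≠ CKO.chiE} =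
      (CKO.piMap A ⁻¹' {((∞ : OnePoint G), fun _ => false)})ᶜ := by
    ext ξ
    simp [CKO.piMap_eq_infty_iff]
  rw [hOmega, Set.image_compl_preimage, CKO.range_piMap hA]

/-- The map `π(ξ) = (σ(ξ)₁, R_ξ(e))` is continuous on `Ω̃_A`, has range
exactly `Γ̃_A`, and maps `Ω_A = Ω̃_A \ {{e}}` onto `Γ_A = Γ̃_A \ {(⋆, 𝟎)}`. -/
theorem stmt_5 {G : Type*} [Nonempty G] [DecidableEq G]
    [TopologicalSpace G] [DiscreteTopology G]
    (A : G → G → Bool) (hA : ∀ i : G, ∃ j : G, A i j = true) :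
    Continuous (CKO.piMap A) ∧
    Set.range (CKO.piMap A) = CKO.GammaT A ∧
    CKO.piMap A '' {ξ : CKO.OmegaT A | (ξ : FreeGroup G → Bool) ≠ CKO.chiE} =
      CKO.GammaT A \ {((∞ : OnePoint G), fun _ => false)} :=
  stmt_5_general A hA
end
end

section
/- There exists an injective unital *-algebra homomorphism ψ : R̃_A → C(Ω̃_A, ℂ) such that for every i ∈ 𝒢, ψ(δ_i) is the characteristic function of Δ_i = {ξ ∈ Ω̃_A : i ∈ ξ} and ψ(ρ_i) is the characteristic function of Δ_{i⁻¹} = {ξ ∈ Ω̃_A : i⁻¹ ∈ ξ}. Consequently R̃_A is isomorphic to the closed unital *-subalgebra of C(Ω̃_A, ℂ) generated by the characteristic functions of the sets Δ_i and Δ_{i⁻¹}, i ∈ 𝒢. -/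
open scoped BoundedContinuousFunction
open OnePoint

noncomputable section

namespace CKO

variable {G : Type*} [DecidableEq G]

instance OmegaT.compactSpace (A : G → G → Bool) : CompactSpace (OmegaT A) :=
  isCompact_iff_compactSpace.mp (isClosed_closure).isCompact

/-- The characteristic function of `Δ_i = {ξ ∈ Ω̃_A : i ∈ ξ}` as a continuous function. -/
def indDelta (A : G → G → Bool) (i : G) : C(OmegaT A, ℂ) :=
  ⟨fun ξ => if (ξ : FreeGroup G → Bool) (FreeGroup.of i) = true then 1 else 0,
    (continuous_of_discreteTopology
        (f := fun b : Bool => if b = true then (1 : ℂ) else 0)).comp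
      ((continuous_apply (FreeGroup.of i)).comp continuous_subtype_val)⟩

/-- The characteristic function of `Δ_{i⁻¹} = {ξ ∈ Ω̃_A : i⁻¹ ∈ ξ}` as a continuous
function. -/
def indQ (A : G → G → Bool) (i : G) : C(OmegaT A, ℂ) :=
  ⟨fun ξ => if (ξ : FreeGroup G → Bool) ((FreeGroup.of i)⁻¹) = true then 1 else 0,
    (continuous_of_discreteTopology
        (f := fun b : Bool => if b = true then (1 : ℂ) else 0)).comp
      ((continuous_apply ((FreeGroup.of i)⁻¹)).comp continuous_subtype_val)⟩

end CKO

/-!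
Choose `σ : G → G` with `A(i, σ i) = 1`. For each `j` the path `j → σ j → σ² j → ⋯`, together
with all finite `A`-paths entering it, spans an unbounded Cuntz–Krieger set `ξ_j`, and evaluation
at these points is a *-homomorphism `E : C(Ω̃_A) → ℓ^∞(G)` with `E 1_{Δ_i} = δ_i` and
`E 1_{Δ_{i⁻¹}} = ρ_i`. Functions in the *-algebra generated by these indicators only see the
letters of length one of a point, and an unbounded Cuntz–Krieger set `ξ` contains some `y`,
which fixes its letters of length one to be those of `ξ_y`. As such `ξ` are dense in `Ω̃_A`,
`E` is isometric on the generated C*-algebra and so inverts the required `ψ`.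
-/

namespace StarAlgHom

open scoped CStarAlgebra

variable {A B : Type*} [CStarAlgebra A] [CStarAlgebra B]

theorem norm_map_eq_of_mem_topologicalClosure (E : A →⋆ₐ[ℂ] B) {s : Set A}
    (hs : ∀ a ∈ StarAlgebra.adjoin ℂ s, ‖a‖ ≤ ‖E a‖) {a : A}
    (ha : a ∈ (StarAlgebra.adjoin ℂ s).topologicalClosure) : ‖E a‖ = ‖a‖ :=
  le_antisymm (NonUnitalStarAlgHom.norm_apply_le E a) <|
    closure_minimal hs (isClosed_le continuous_norm (map_continuous E).norm) ha

theorem exists_injective_of_norm_le_on_adjoin (E : A →⋆ₐ[ℂ] B) {s : Set A} {t : Set B}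
    (hst : E '' s = t) (hs : ∀ a ∈ StarAlgebra.adjoin ℂ s, ‖a‖ ≤ ‖E a‖) :
    ∃ ψ : (StarAlgebra.adjoin ℂ t).topologicalClosure →⋆ₐ[ℂ] A,
      Function.Injective ψ ∧
      (∀ a ∈ s, ∀ b : (StarAlgebra.adjoin ℂ t).topologicalClosure, (b : B) = E a → ψ b = a) ∧
      Set.range ψ = (StarAlgebra.adjoin ℂ s).topologicalClosure := by
  set S := (StarAlgebra.adjoin ℂ s).topologicalClosure
  set T := (StarAlgebra.adjoin ℂ t).topologicalClosure
  have himage : E '' (StarAlgebra.adjoin ℂ s : Set A) = StarAlgebra.adjoin ℂ t := by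
    rw [← StarSubalgebra.coe_map, StarAlgHom.map_adjoin, hst]
  have hisom : Isometry (E.comp S.subtype) :=
    AddMonoidHomClass.isometry_of_norm _ fun a =>
      norm_map_eq_of_mem_topologicalClosure E hs a.2
  have hrange : Set.range (E.comp S.subtype) = T := by
    have : IsClosed (S : Set A) := (StarAlgebra.adjoin ℂ s).isClosed_topologicalClosure
    apply subset_antisymm
    · rintro _ ⟨a, rfl⟩
      rw [StarSubalgebra.topologicalClosure_coe, ← himage]
      exact image_closure_subset_closure_image (map_continuous E) ⟨a, a.2, rfl⟩
    · refine closure_minimal ?_ hisom.isClosedEmbedding.isClosed_range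
      rw [← himage]
      rintro _ ⟨a, ha, rfl⟩
      exact ⟨⟨a, StarSubalgebra.le_topologicalClosure _ ha⟩, rfl⟩
  let e : S ≃⋆ₐ[ℂ] T := StarAlgEquiv.ofBijective
    ((E.comp S.subtype).codRestrict T fun a => hrange.le ⟨a, rfl⟩)
    ⟨fun a b h => hisom.injective (congrArg Subtype.val h),
      fun b => (hrange.ge b.2).imp fun a h => Subtype.ext h⟩
  refine ⟨S.subtype.comp e.symm.toStarAlgHom, Subtype.val_injective.comp e.symm.injective,
    fun a ha b hb => ?_, ?_⟩
  · have : e ⟨a, StarSubalgebra.le_topologicalClosure _ (StarAlgebra.subset_adjoin ℂ s ha)⟩ = b :=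
      Subtype.ext hb.symm
    simp [← this]
  · change Set.range (Subtype.val ∘ e.symm) = S
    rw [Set.range_comp, EquivLike.range_eq_univ, Set.image_univ, Subtype.range_coe]

end StarAlgHom

namespace FreeGroup

variable {α : Type*}

theorem mk_append_of (L : List (α × Bool)) (x : α) : mk (L ++ [(x, true)]) = mk L * of x :=
  mul_mk.symm

theorem mk_append_inv_of (L : List (α × Bool)) (x : α) :
    mk (L ++ [(x, false)]) = mk L * (of x)⁻¹ := by
  rw [← mul_mk, of, inv_mk]
  rfl

theorem isReduced_of_forall_snd_eq {L : List (α × Bool)} {b : Bool} (h : ∀ p ∈ L, p.2 = b) :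
    IsReduced L :=
  (List.pairwise_of_forall_mem_list (r := fun p q : α × Bool => p.1 = q.1 → p.2 = q.2)
    fun p hp q hq _ => (h p hp).trans (h q hq).symm).isChain

theorem isReduced_append_singleton {L : List (α × Bool)} {e : α × Bool} (hL : IsReduced L)
    (he : ∀ p ∈ L.getLast?, p.1 = e.1 → p.2 = e.2) : IsReduced (L ++ [e]) :=
  List.isChain_append.mpr ⟨hL, IsReduced.singleton, fun p hp q hq => by
    obtain rfl : q = e := by simpa using hq.symm
    exact he p hp⟩

variable [DecidableEq α]

theorem toWord_mk_of_isReduced {L : List (α × Bool)} (h : IsReduced L) : (mk L).toWord = L := by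
  rw [toWord_mk, h.reduce_eq]

end FreeGroup

namespace CKO

open FreeGroup

section

variable {G : Type*}

theorem inv_mk_mem_pos {L : List (G × Bool)} (h : ∀ p ∈ L, p.2 = false) : (mk L)⁻¹ ∈ pos G := by
  induction L with
  | nil => simp [← one_eq_mk, (pos G).one_mem]
  | cons p L ih =>
    obtain ⟨x, hx⟩ : ∃ x, p = (x, false) := ⟨p.1, Prod.ext rfl (h p (by simp))⟩
    rw [hx, ← List.singleton_append, ← mul_mk]
    change ((of x)⁻¹ * mk L)⁻¹ ∈ pos G
    rw [mul_inv_rev, inv_inv]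
    exact mul_mem (ih fun q hq => h q (List.mem_cons_of_mem _ hq))
      (Submonoid.subset_closure ⟨x, rfl⟩)

def degree : FreeGroup G →* Multiplicative ℤ :=
  FreeGroup.lift fun _ => Multiplicative.ofAdd 1

theorem degree_nonneg_of_mem_pos {p : FreeGroup G} (hp : p ∈ pos G) : 0 ≤ (degree p).toAdd := by
  induction hp using Submonoid.closure_induction with
  | mem x hx => obtain ⟨g, rfl⟩ := hx; simp [degree]
  | one => simp
  | mul x y _ _ hx hy => simpa using add_nonneg hx hy

theorem degree_mk_map_true (l : List G) :
    degree (mk (l.map (·, true))) = .ofAdd (l.length : ℤ) := by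
  induction l with
  | nil => simp [← one_eq_mk]
  | cons x l ih =>
    rw [List.map_cons, ← List.singleton_append, ← mul_mk, _root_.map_mul, ih]
    simp [degree, ← ofAdd_add, add_comm]

theorem unbounded_of_forall_exists_lt_degree {ξ : FreeGroup G → Bool}
    (h : ∀ n : ℤ, ∃ s, ξ s = true ∧ n < (degree s).toAdd) : Unbounded ξ := by
  rintro ⟨t, ht⟩
  obtain ⟨s, hs, hlt⟩ := h (degree t).toAdd
  have := degree_nonneg_of_mem_pos (ht s hs)
  simp only [_root_.map_mul, _root_.map_inv, toAdd_mul, toAdd_inv] at this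
  omega

variable [DecidableEq G] {A : G → G → Bool} {ξ : FreeGroup G → Bool}

theorem IsCK.apply_of_iff (hξ : IsCK A ξ) {y : G} (hy : ξ (of y) = true) (i : G) :
    ξ (of i) = true ↔ i = y :=
  ⟨fun hi => hξ.2.2.1 1 hξ.1 i y (by simpa using hi) (by simpa using hy), by rintro rfl; exact hy⟩

theorem IsCK.apply_inv_of_iff (hξ : IsCK A ξ) {y : G} (hy : ξ (of y) = true) (i : G) :
    ξ (of i)⁻¹ = true ↔ A i y = true := by
  simpa using hξ.2.2.2 1 hξ.1 y (by simpa using hy) i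

/-- The first positive letter would follow some `x⁻¹`, and rule (b) at the preceding vertex
forces it to be `x`, which cancels. -/
theorem IsCK.forall_snd_eq_false (hξ : IsCK A ξ) (h₀ : ∀ y, ξ (of y) ≠ true) {s : FreeGroup G}
    (hs : ξ s = true) : ∀ p ∈ s.toWord, p.2 = false := by
  obtain ⟨-, hpre, hsucc, -⟩ := hξ
  suffices ∀ L, IsReduced L → ξ (mk L) = true → ∀ p ∈ L, p.2 = false by
    exact this _ isReduced_toWord (by rwa [mk_toWord])
  intro L
  induction L using List.reverseRecOn with
  | nil => simp
  | append_singleton L e ih =>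
    intro hred hmem
    have hpre' : ∀ M, M <+: L → ξ (mk M) = true := fun M hM =>
      hpre _ hmem M (by rw [toWord_mk_of_isReduced hred]; exact hM.trans (List.prefix_append _ _))
    have hL := ih (hred.infix (List.prefix_append _ _).isInfix) (hpre' L (List.prefix_refl L))
    obtain ⟨a, _ | _⟩ := e
    · simpa [or_imp, forall_and] using hL
    exfalso
    rcases List.eq_nil_or_concat L with rfl | ⟨M, ⟨x, c⟩, rfl⟩
    · exact h₀ a hmem
    rw [List.concat_eq_append] at *
    obtain rfl : c = false := hL (x, c) (by simp)
    have hx : ξ (mk (M ++ [(x, false)]) * of x) = true := by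
      rw [mk_append_inv_of, inv_mul_cancel_right]
      exact hpre' M (List.prefix_append _ _)
    have ha : ξ (mk (M ++ [(x, false)]) * of a) = true := by rwa [← mk_append_of]
    obtain rfl := hsucc _ (hpre' _ (List.prefix_refl _)) x a hx ha
    have := hred.infix (L₁ := [(x, false), (x, true)]) ⟨M, [], by simp⟩
    simp [FreeGroup.IsReduced] at this

theorem IsCK.exists_apply_of_eq_true (hξ : IsCK A ξ) (hub : Unbounded ξ) :
    ∃ y, ξ (of y) = true := by
  by_contra! h₀
  refine hub ⟨1, fun s hs => ?_⟩
  rw [mul_one, ← mk_toWord (x := s)]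
  exact inv_mk_mem_pos (hξ.forall_snd_eq_false h₀ hs)

end

section

variable {G : Type*} (σ : G → G) (j : G)

def stemWord (k : ℕ) (xs : List G) : List (G × Bool) :=
  (List.iterate σ j k).map (·, true) ++ xs.map (·, false)

theorem stemWord_inj {k k' : ℕ} {xs xs' : List G}
    (h : stemWord σ j k xs = stemWord σ j k' xs') : k = k' ∧ xs = xs' := by
  have hpos := congrArg (List.filter (·.2)) h
  have hneg := congrArg (List.filter (! ·.2)) h
  simp only [stemWord, List.filter_append, List.filter_map, Function.comp_def] at hpos hneg
  simp [List.map_inj_right] at hpos hneg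
  exact ⟨by simpa using congrArg List.length hpos, hneg⟩

theorem stemWord_succ_nil (k : ℕ) :
    stemWord σ j (k + 1) [] = stemWord σ j k [] ++ [(σ^[k] j, true)] := by
  simp only [stemWord, List.iterate_add _ _ k 1]
  simp

theorem stemWord_append_singleton (k : ℕ) (xs : List G) (x : G) :
    stemWord σ j k (xs ++ [x]) = stemWord σ j k xs ++ [(x, false)] := by
  simp [stemWord]

theorem eq_nil_of_getLast?_stemWord {k : ℕ} {xs : List G} {y : G}
    (h : (stemWord σ j k xs).getLast? = Option.some (y, true)) : xs = [] := by
  rcases List.eq_nil_or_concat xs with rfl | ⟨l, b, rfl⟩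
  · rfl
  · simp [stemWord_append_singleton] at h

theorem eq_getLast_of_getLast?_stemWord {k : ℕ} {xs : List G} {y : G}
    (h : (stemWord σ j k xs).getLast? = Option.some (y, false)) :
    y = (σ^[k] j :: xs).getLast (List.cons_ne_nil _ _) := by
  rcases List.eq_nil_or_concat xs with rfl | ⟨l, b, rfl⟩
  · simp [stemWord] at h
  · simp_all [stemWord_append_singleton]

variable (A : G → G → Bool)

/-- The chain condition says that `xₘ → ⋯ → x₁ → σ^k(j) → σ^{k+1}(j) → ⋯` is an `A`-path. -/
def IsModelWord (L : List (G × Bool)) : Prop :=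
  ∃ k xs, L = stemWord σ j k xs ∧ List.IsChain (fun a b => A b a = true) (σ^[k] j :: xs)

theorem isModelWord_stemWord_iff {k : ℕ} {xs : List G} :
    IsModelWord σ j A (stemWord σ j k xs) ↔
      List.IsChain (fun a b => A b a = true) (σ^[k] j :: xs) := by
  refine ⟨?_, fun h => ⟨k, xs, rfl, h⟩⟩
  rintro ⟨k', xs', heq, hc⟩
  obtain ⟨rfl, rfl⟩ := stemWord_inj σ j heq
  exact hc

theorem IsModelWord.of_prefix {L p : List (G × Bool)} (h : IsModelWord σ j A L) (hp : p <+: L) :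
    IsModelWord σ j A p := by
  obtain ⟨k, xs, rfl, hc⟩ := h
  rw [List.prefix_iff_eq_take] at hp
  rw [hp, stemWord, List.take_append, ← List.map_take, ← List.map_take, List.take_iterate,
    List.length_map, List.length_iterate]
  refine ⟨min p.length k, xs.take (p.length - k), rfl, ?_⟩
  rcases le_or_gt k p.length with hk | hk
  · rw [min_eq_right hk]
    simpa using hc.take (p.length - k + 1)
  · simp [Nat.sub_eq_zero_of_le hk.le]

variable [DecidableEq G]

open Classical in
def model : FreeGroup G → Bool := fun ω => decide (IsModelWord σ j A ω.toWord)

theorem model_eq_true_iff {ω : FreeGroup G} :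
    model σ j A ω = true ↔ IsModelWord σ j A ω.toWord := by
  simp [model]

theorem model_mk_stemWord_nil (k : ℕ) : model σ j A (mk (stemWord σ j k [])) = true := by
  rw [model_eq_true_iff, toWord_mk_of_isReduced (isReduced_of_forall_snd_eq (b := true) ?_),
    isModelWord_stemWord_iff]
  · exact .singleton _
  · simp [stemWord]

theorem model_mul_of {ω : FreeGroup G} {k : ℕ} {xs : List G} (hω : ω.toWord = stemWord σ j k xs)
    {y : G} (h : model σ j A (ω * of y) = true) :
    y = (σ^[k] j :: xs).getLast (List.cons_ne_nil _ _) := by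
  by_contra hy
  -- otherwise `ω y` is reduced and ends in a positive letter, so it must lie on the stem
  have hred : IsReduced (stemWord σ j k xs ++ [(y, true)]) := by
    rw [← hω]
    refine isReduced_append_singleton isReduced_toWord fun p hp hpy => ?_
    by_contra hp₂
    obtain rfl : p = (y, false) := Prod.ext hpy (by simpa using hp₂)
    exact hy (eq_getLast_of_getLast?_stemWord σ j (hω ▸ hp))
  rw [model_eq_true_iff, ← mk_toWord (x := ω), hω, ← mk_append_of,
    toWord_mk_of_isReduced hred] at h
  obtain ⟨k', xs', heq, -⟩ := h
  obtain rfl : xs' = [] := eq_nil_of_getLast?_stemWord σ j (k := k') (y := y) (by simp [← heq])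
  obtain rfl : xs = [] := by
    simpa [stemWord, List.filter_append, List.filter_map, Function.comp_def] using
      congrArg (List.filter (! ·.2)) heq
  obtain rfl : k' = k + 1 := by simpa [stemWord] using (congrArg List.length heq).symm
  rw [stemWord_succ_nil] at heq
  simp_all

theorem model_mul_inv_of_iff (hσ : ∀ i, A i (σ i) = true) {ω : FreeGroup G} {k : ℕ}
    {xs : List G} (hω : ω.toWord = stemWord σ j k xs)
    (hc : List.IsChain (fun a b => A b a = true) (σ^[k] j :: xs)) (x : G) :
    model σ j A (ω * (of x)⁻¹) = true ↔
      A x ((σ^[k] j :: xs).getLast (List.cons_ne_nil _ _)) = true := by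
  by_cases hcancel : (stemWord σ j k xs).getLast? = Option.some (x, true)
  · obtain rfl := eq_nil_of_getLast?_stemWord σ j hcancel
    obtain ⟨k, rfl⟩ : ∃ k₀, k = k₀ + 1 := Nat.exists_eq_succ_of_ne_zero (by
      rintro rfl; simp [stemWord] at hcancel)
    obtain rfl : x = σ^[k] j := by simpa [stemWord_succ_nil] using hcancel.symm
    have : ω * (of (σ^[k] j))⁻¹ = mk (stemWord σ j k []) := by
      rw [← mk_toWord (x := ω), hω, stemWord_succ_nil, mk_append_of, mul_inv_cancel_right]
    simp [this, model_mk_stemWord_nil, Function.iterate_succ_apply', hσ]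
  · have hred : IsReduced (stemWord σ j k xs ++ [(x, false)]) := by
      rw [← hω]
      refine isReduced_append_singleton isReduced_toWord fun p hp hpx => ?_
      by_contra hp₂
      obtain rfl : p = (x, true) := Prod.ext hpx (by simpa using hp₂)
      exact hcancel (hω ▸ hp)
    rw [model_eq_true_iff, ← mk_toWord (x := ω), hω, ← mk_append_inv_of,
      toWord_mk_of_isReduced hred, ← stemWord_append_singleton, isModelWord_stemWord_iff,
      ← List.cons_append, List.isChain_append]
    simp [hc, List.getLast?_eq_some_getLast]

theorem isCK_model (hσ : ∀ i, A i (σ i) = true) : IsCK A (model σ j A) := by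
  refine ⟨?_, fun ω hω p hp => ?_, fun ω hω y z hy hz => ?_, fun ω hω y hy x => ?_⟩
  · simpa [stemWord, ← one_eq_mk] using model_mk_stemWord_nil σ j A 0
  · rw [model_eq_true_iff] at hω ⊢
    rw [toWord_mk_of_isReduced (isReduced_toWord.infix hp.isInfix)]
    exact hω.of_prefix σ j A hp
  · obtain ⟨k, xs, hk, -⟩ := (model_eq_true_iff σ j A).mp hω
    rw [model_mul_of σ j A hk hy, model_mul_of σ j A hk hz]
  · obtain ⟨k, xs, hk, hc⟩ := (model_eq_true_iff σ j A).mp hω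
    rw [model_mul_of σ j A hk hy]
    exact model_mul_inv_of_iff σ j A hσ hk hc x

theorem unbounded_model : Unbounded (model σ j A) := by
  refine unbounded_of_forall_exists_lt_degree fun n =>
    ⟨_, model_mk_stemWord_nil σ j A (n.toNat + 1), ?_⟩
  simp only [stemWord, List.map_nil, List.append_nil, degree_mk_map_true, toAdd_ofAdd,
    List.length_iterate]
  omega

theorem model_of_self : model σ j A (of j) = true :=
  model_mk_stemWord_nil σ j A 1

end

section

variable {G : Type*} [DecidableEq G] (A : G → G → Bool) (σ : G → G)
  (hσ : ∀ i, A i (σ i) = true)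

theorem indDelta_apply (i : G) (ξ : OmegaT A) :
    indDelta A i ξ = if (ξ : FreeGroup G → Bool) (of i) = true then 1 else 0 :=
  rfl

theorem indQ_apply (i : G) (ξ : OmegaT A) :
    indQ A i ξ = if (ξ : FreeGroup G → Bool) (of i)⁻¹ = true then 1 else 0 :=
  rfl

def modelPoint (j : G) : OmegaT A :=
  ⟨model σ j A, subset_closure ⟨isCK_model σ j A hσ, unbounded_model σ j A⟩⟩

theorem exists_eqOn_modelPoint {ξ : OmegaT A}
    (hξ : IsCK A ξ ∧ Unbounded (ξ : FreeGroup G → Bool)) :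
    ∃ y, (Set.range (indDelta A) ∪ Set.range (indQ A)).EqOn (ContinuousMap.evalStarAlgHom ℂ ℂ ξ)
      (ContinuousMap.evalStarAlgHom ℂ ℂ (modelPoint A σ hσ y)) := by
  obtain ⟨y, hy⟩ := hξ.1.exists_apply_of_eq_true hξ.2
  have hm := isCK_model σ y A hσ
  refine ⟨y, ?_⟩
  rintro _ (⟨i, rfl⟩ | ⟨i, rfl⟩)
  · simp only [ContinuousMap.evalStarAlgHom_apply, indDelta_apply, modelPoint,
      hξ.1.apply_of_iff hy, hm.apply_of_iff (model_of_self σ y A)]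
  · simp only [ContinuousMap.evalStarAlgHom_apply, indQ_apply, modelPoint,
      hξ.1.apply_inv_of_iff hy, hm.apply_inv_of_iff (model_of_self σ y A)]

variable [TopologicalSpace G] [DiscreteTopology G]

def evalModel : C(OmegaT A, ℂ) →⋆ₐ[ℂ] (G →ᵇ ℂ) where
  toFun f := BoundedContinuousFunction.ofNormedAddCommGroupDiscrete
    (fun j => f (modelPoint A σ hσ j)) ‖f‖ fun j => f.norm_coe_le_norm _
  map_one' := by ext; simp
  map_mul' f g := by ext; simp
  map_zero' := by ext; simp
  map_add' f g := by ext; simp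
  commutes' c := by ext; simp
  map_star' f := by ext; simp

theorem evalModel_apply (f : C(OmegaT A, ℂ)) (j : G) :
    evalModel A σ hσ f j = f (modelPoint A σ hσ j) :=
  rfl

theorem evalModel_indDelta (i : G) : evalModel A σ hσ (indDelta A i) = CK.delB i := by
  ext j
  simp only [evalModel_apply, indDelta_apply, modelPoint,
    (isCK_model σ j A hσ).apply_of_iff (model_of_self σ j A), eq_comm (a := i)]
  rfl

theorem evalModel_indQ (i : G) : evalModel A σ hσ (indQ A i) = CK.rhoB A i := by
  ext j
  simp only [evalModel_apply, indQ_apply, modelPoint,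
    (isCK_model σ j A hσ).apply_inv_of_iff (model_of_self σ j A)]
  rfl

theorem image_evalModel :
    evalModel A σ hσ '' (Set.range (indDelta A) ∪ Set.range (indQ A)) = CK.gens A := by
  rw [Set.image_union, ← Set.range_comp, ← Set.range_comp, CK.gens, Set.union_comm]
  congr 2 <;> ext i <;> simp [evalModel_indDelta, evalModel_indQ]

theorem norm_le_norm_evalModel {f : C(OmegaT A, ℂ)}
    (hf : f ∈ StarAlgebra.adjoin ℂ (Set.range (indDelta A) ∪ Set.range (indQ A))) :
    ‖f‖ ≤ ‖evalModel A σ hσ f‖ := by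
  have hdense : Dense ((↑) ⁻¹' {ξ | IsCK A ξ ∧ Unbounded ξ} : Set (OmegaT A)) := by
    rw [Subtype.dense_iff, Subtype.image_preimage_coe, OmegaT,
      Set.inter_eq_right.mpr subset_closure]
  refine (ContinuousMap.norm_le f (norm_nonneg _)).mpr <| hdense.induction (fun ξ hξ => ?_)
    (isClosed_le (continuous_norm.comp f.continuous) continuous_const)
  obtain ⟨y, hy⟩ := exists_eqOn_modelPoint A σ hσ hξ
  have hfξ : f ξ = f (modelPoint A σ hσ y) := StarAlgHom.adjoin_le_equalizer _ _ hy hf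
  rw [hfξ, ← evalModel_apply]
  exact BoundedContinuousFunction.norm_coe_le_norm _ y

end

end CKO

theorem stmt_6_general {G : Type*} [DecidableEq G]
    [TopologicalSpace G] [DiscreteTopology G]
    (A : G → G → Bool) (hA : ∀ i : G, ∃ j : G, A i j = true) :
    ∃ ψ : CK.RtA A →⋆ₐ[ℂ] C(CKO.OmegaT A, ℂ),
      Function.Injective ψ ∧
      (∀ (i : G) (h : CK.delB i ∈ CK.RtA A), ψ ⟨CK.delB i, h⟩ = CKO.indDelta A i) ∧
      (∀ (i : G) (h : CK.rhoB A i ∈ CK.RtA A), ψ ⟨CK.rhoB A i, h⟩ = CKO.indQ A i) ∧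
      Set.range ψ = ((StarAlgebra.adjoin ℂ
          (Set.range (CKO.indDelta A) ∪ Set.range (CKO.indQ A))).topologicalClosure :
        Set C(CKO.OmegaT A, ℂ)) := by
  choose σ hσ using hA
  obtain ⟨ψ, hinj, hψ, hrange⟩ := (CKO.evalModel A σ hσ).exists_injective_of_norm_le_on_adjoin
    (CKO.image_evalModel A σ hσ) fun f hf => CKO.norm_le_norm_evalModel A σ hσ hf
  exact ⟨ψ, hinj, fun i h => hψ _ (Or.inl ⟨i, rfl⟩) _ (CKO.evalModel_indDelta A σ hσ i).symm,
    fun i h => hψ _ (Or.inr ⟨i, rfl⟩) _ (CKO.evalModel_indQ A σ hσ i).symm, hrange⟩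

/-- There is an injective unital *-algebra homomorphism
`ψ : R̃_A → C(Ω̃_A, ℂ)` sending `δ_i` to the characteristic function of `Δ_i` and `ρ_i` to
the characteristic function of `Δ_{i⁻¹}`; consequently `R̃_A` is isomorphic to the closed
unital *-subalgebra of `C(Ω̃_A, ℂ)` generated by these characteristic functions. -/
theorem stmt_6 {G : Type*} [Nonempty G] [DecidableEq G]
    [TopologicalSpace G] [DiscreteTopology G]
    (A : G → G → Bool) (hA : ∀ i : G, ∃ j : G, A i j = true) :
    ∃ ψ : CK.RtA A →⋆ₐ[ℂ] C(CKO.OmegaT A, ℂ),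
      Function.Injective ψ ∧
      (∀ (i : G) (h : CK.delB i ∈ CK.RtA A), ψ ⟨CK.delB i, h⟩ = CKO.indDelta A i) ∧
      (∀ (i : G) (h : CK.rhoB A i ∈ CK.RtA A), ψ ⟨CK.rhoB A i, h⟩ = CKO.indQ A i) ∧
      Set.range ψ = ((StarAlgebra.adjoin ℂ
          (Set.range (CKO.indDelta A) ∪ Set.range (CKO.indQ A))).topologicalClosure :
        Set C(CKO.OmegaT A, ℂ)) :=
  stmt_6_general A hA
end
end

section
/- Let X be a locally compact Hausdorff space and {E_i}_{i∈Λ} a family of idempotent elements of C₀(X, ℂ) (so each E_i is a continuous {0,1}-valued function vanishing at infinity), and suppose the smallest closed subalgebra of C₀(X, ℂ) containing every E_i is all of C₀(X, ℂ). Then a function f ∈ C₀(X, ℂ) takes all its values in ℤ if and only if f belongs to the subring of C₀(X, ℂ) generated by {E_i : i ∈ Λ}. (In other words, C₀(X; ℤ) equals the ring generated by the E_i.) -/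
/-!
An integer-valued `f ∈ C₀(X, ℂ)` is approximated within `1/2` by a finite combination
`g = ∑ c_p p` of products `p` of the `E_i`. These products are `{0,1}`-valued, so `g x` only depends
on which `p` equal `1` at `x`, and so does `f x`, being the integer nearest to `g x`. Any integer
function of this `{0,1}`-pattern that vanishes on the zero pattern is an integer polynomial without
constant term in the `p`, by induction on the number of `p`. Conversely, integer combinations of
products of idempotents are integer-valued.
-/

open scoped ZeroAtInfty

theorem RCLike.round_re_eq_of_norm_sub_lt {𝕜 : Type*} [RCLike 𝕜] {z : 𝕜} {n : ℤ}
    (h : ‖z - n‖ < 1 / 2) : round (re z) = n := by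
  have hre : |re z - n| < 1 / 2 := by
    simpa using (abs_re_le_norm (z - n)).trans_lt h
  rw [round_eq_iff]
  constructor <;> linarith [abs_lt.mp hre]

theorem Subsemigroup.isIdempotentElem_of_mem_closure {M : Type*} [CommSemigroup M] {s : Set M}
    (hs : ∀ a ∈ s, IsIdempotentElem a) {a : M} (ha : a ∈ closure s) : IsIdempotentElem a :=
  closure_induction hs (fun _ _ _ _ => IsIdempotentElem.mul) ha

theorem NonUnitalSubring.closure_subsemigroupClosure_le {R : Type*} [NonUnitalRing R] (s : Set R) :
    closure (Subsemigroup.closure s : Set R) ≤ closure s :=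
  closure_le.mpr fun _ ha =>
    Subsemigroup.closure_induction (fun _ h => subset_closure h) (fun _ _ _ _ => mul_mem) ha

namespace ZeroAtInftyContinuousMap

variable {X : Type*} [TopologicalSpace X]

theorem coe_sum {β ι : Type*} [TopologicalSpace β] [AddCommMonoid β] [ContinuousAdd β]
    (s : Finset ι) (f : ι → C₀(X, β)) : ⇑(∑ i ∈ s, f i) = ∑ i ∈ s, ⇑(f i) :=
  map_sum (⟨⟨DFunLike.coe, coe_zero⟩, coe_add⟩ : C₀(X, β) →+ X → β) f s

theorem dist_apply_le_dist {β : Type*} [PseudoMetricSpace β] [Zero β] (f g : C₀(X, β)) (x : X) :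
    dist (f x) (g x) ≤ dist f g :=
  f.toBCF.dist_coe_le_dist (g := g.toBCF) x

variable {R : Type*} [TopologicalSpace R] [Ring R] [IsTopologicalRing R]

variable (X R) in
def intValued : NonUnitalSubring C₀(X, R) where
  carrier := {f | ∀ x, ∃ n : ℤ, f x = n}
  zero_mem' _ := ⟨0, by simp⟩
  add_mem' {f g} hf hg x := by
    obtain ⟨m, hm⟩ := hf x
    obtain ⟨n, hn⟩ := hg x
    exact ⟨m + n, by simp [hm, hn]⟩
  neg_mem' {f} hf x := by
    obtain ⟨n, hn⟩ := hf x
    exact ⟨-n, by simp [hn]⟩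
  mul_mem' {f g} hf hg x := by
    obtain ⟨m, hm⟩ := hf x
    obtain ⟨n, hn⟩ := hg x
    exact ⟨m * n, by simp [hm, hn]⟩

theorem apply_eq_zero_or_one_of_isIdempotentElem [NoZeroDivisors R] {p : C₀(X, R)}
    (hp : IsIdempotentElem p) (x : X) : p x = 0 ∨ p x = 1 :=
  IsIdempotentElem.iff_eq_zero_or_one.mp (congrFun (congrArg DFunLike.coe hp) x)

theorem closure_le_intValued [NoZeroDivisors R] {S : Set C₀(X, R)}
    (hS : ∀ p ∈ S, IsIdempotentElem p) : NonUnitalSubring.closure S ≤ intValued X R := by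
  refine NonUnitalSubring.closure_le.mpr fun p hp x => ?_
  rcases apply_eq_zero_or_one_of_isIdempotentElem (hS p hp) x with h | h
  · exact ⟨0, by simp [h]⟩
  · exact ⟨1, by simp [h]⟩

theorem exists_mem_closure_apply_eq_intCast {F : Set C₀(X, R)} (hF : F.Finite)
    (h01 : ∀ p ∈ F, ∀ x, p x = 0 ∨ p x = 1) (φ : Set C₀(X, R) → ℤ) (hφ : φ ∅ = 0) :
    ∃ b ∈ NonUnitalSubring.closure F, ∀ x, b x = φ {p ∈ F | p x = 1} := by
  induction F, hF using Set.Finite.induction_on generalizing φ with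
  | empty => exact ⟨0, zero_mem _, fun x => by simp [hφ]⟩
  | @insert q F _ _ ih =>
    rw [Set.forall_mem_insert] at h01
    obtain ⟨hq01, hF01⟩ := h01
    obtain ⟨b₀, hb₀, hb₀x⟩ := ih hF01 φ hφ
    -- `φ (insert q T) = φ T + φ {q} + ψ T` with `ψ ∅ = 0`; the last two terms count iff `q x = 1`
    obtain ⟨b₁, hb₁, hb₁x⟩ :=
      ih hF01 (fun S => φ (insert q S) - φ S - φ {q}) (by simp [hφ])
    have hcl : NonUnitalSubring.closure F ≤ NonUnitalSubring.closure (insert q F) :=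
      NonUnitalSubring.closure_mono (Set.subset_insert q F)
    have hq : q ∈ NonUnitalSubring.closure (insert q F) :=
      NonUnitalSubring.subset_closure (Set.mem_insert q F)
    refine ⟨b₀ + φ {q} • q + q * b₁,
      add_mem (add_mem (hcl hb₀) (zsmul_mem hq _)) (mul_mem hq (hcl hb₁)), fun x => ?_⟩
    by_cases hqx : q x = 1
    · have hpattern : {p ∈ insert q F | p x = 1} = insert q {p ∈ F | p x = 1} := by
        ext p; by_cases hp : p = q <;> simp [hp, hqx]
      rw [hpattern]
      simp [hb₀x, hb₁x, hqx]
    · have hpattern : {p ∈ insert q F | p x = 1} = {p ∈ F | p x = 1} := by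
        ext p; by_cases hp : p = q <;> simp [hp, hqx]
      rw [hpattern]
      simp [hb₀x, hb₁x, (hq01 x).resolve_right hqx]

theorem mem_closure_of_dist_lt_one_half {𝕜 : Type*} [RCLike 𝕜] {S : Set C₀(X, 𝕜)}
    (hS : ∀ p ∈ S, IsIdempotentElem p) {f g : C₀(X, 𝕜)} (hf : f ∈ intValued X 𝕜)
    (hg : g ∈ Submodule.span 𝕜 S) (hfg : dist f g < 1 / 2) : f ∈ NonUnitalSubring.closure S := by
  obtain ⟨c, t, hts, -, rfl⟩ := Submodule.mem_span_iff_exists_finset_subset.mp hg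
  have h01 : ∀ p ∈ (t : Set C₀(X, 𝕜)), ∀ x, p x = 0 ∨ p x = 1 :=
    fun p hp => apply_eq_zero_or_one_of_isIdempotentElem (hS p (hts hp))
  obtain ⟨b, hb, hbx⟩ := exists_mem_closure_apply_eq_intCast t.finite_toSet h01
    (fun T => round (RCLike.re (∑ p ∈ t, T.indicator c p))) (by simp)
  suffices f = b from this ▸ NonUnitalSubring.closure_mono hts hb
  ext x
  obtain ⟨n, hn⟩ := hf x
  have hgx : (∑ p ∈ t, c p • p) x = ∑ p ∈ t, {p ∈ (t : Set C₀(X, 𝕜)) | p x = 1}.indicator c p := by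
    simp only [coe_sum, Finset.sum_apply]
    refine Finset.sum_congr rfl fun p hp => ?_
    rcases h01 p hp x with h | h <;> simp [h, hp]
  have hdist : ‖(∑ p ∈ t, c p • p) x - n‖ < 1 / 2 := by
    rw [← dist_eq_norm, dist_comm, ← hn]
    exact (dist_apply_le_dist _ _ x).trans_lt hfg
  rw [hbx, hn, ← hgx, RCLike.round_re_eq_of_norm_sub_lt hdist]

end ZeroAtInftyContinuousMap

theorem stmt_8_general {X : Type*} [TopologicalSpace X]
    {Λ : Type*} (E : Λ → C₀(X, ℂ))
    (hidem : ∀ i : Λ, E i * E i = E i)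
    (hgen : closure ((NonUnitalAlgebra.adjoin ℂ (Set.range E) :
        NonUnitalSubalgebra ℂ C₀(X, ℂ)) : Set C₀(X, ℂ)) = Set.univ) :
    ∀ f : C₀(X, ℂ), (∀ x : X, ∃ n : ℤ, f x = (n : ℂ)) ↔
      f ∈ NonUnitalSubring.closure (Set.range E) := by
  have hE : ∀ p ∈ Set.range E, IsIdempotentElem p := Set.forall_mem_range.mpr hidem
  intro f
  constructor
  · intro hf
    obtain ⟨g, hg, hfg⟩ := Metric.mem_closure_iff.mp (hgen ▸ Set.mem_univ f) (1 / 2) one_half_pos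
    have hspan : g ∈ Submodule.span ℂ (Subsemigroup.closure (Set.range E) : Set C₀(X, ℂ)) := by
      rw [← NonUnitalAlgebra.adjoin_eq_span]
      exact hg
    exact NonUnitalSubring.closure_subsemigroupClosure_le _
      (ZeroAtInftyContinuousMap.mem_closure_of_dist_lt_one_half
        (fun _ => Subsemigroup.isIdempotentElem_of_mem_closure hE) hf hspan hfg)
  · exact fun hf => ZeroAtInftyContinuousMap.closure_le_intValued hE hf

/-- If `X` is locally compact Hausdorff and `{E_i}` is a family of idempotents
of `C₀(X, ℂ)` generating `C₀(X, ℂ)` as a closed subalgebra, then the integer-valued functions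
in `C₀(X, ℂ)` are exactly the members of the subring generated by the `E_i`. -/
theorem stmt_8 {X : Type*} [TopologicalSpace X] [LocallyCompactSpace X] [T2Space X]
    {Λ : Type*} (E : Λ → C₀(X, ℂ))
    (hidem : ∀ i : Λ, E i * E i = E i)
    (hgen : closure ((NonUnitalAlgebra.adjoin ℂ (Set.range E) :
        NonUnitalSubalgebra ℂ C₀(X, ℂ)) : Set C₀(X, ℂ)) = Set.univ) :
    ∀ f : C₀(X, ℂ), (∀ x : X, ∃ n : ℤ, f x = (n : ℂ)) ↔
      f ∈ NonUnitalSubring.closure (Set.range E) :=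
  stmt_8_general E hidem hgen
end

section
/- Let Φ : C(Γ̃_A, ℂ) → ℓ^∞(𝒢) be the isometric unital *-homomorphism Φ(f)(j) = f(j, c_j), whose range is R̃_A. Then Φ restricts to a bijection from C(Γ̃_A; ℤ) := {f ∈ C(Γ̃_A, ℂ) : f takes values in ℤ} onto 𝔯̃_A, and to a bijection from {f ∈ C(Γ̃_A; ℤ) : f(p) = 0 for every p ∈ Γ̃_A with p = (⋆, 𝟎)} onto 𝔯_A (here 𝟎 is the identically zero element of {0,1}^𝒢). In other words, 𝔯̃_A ≅ C(Γ̃_A; ℤ) and 𝔯_A ≅ C₀(Γ_A; ℤ) where Γ_A := Γ̃_A \ {(⋆,𝟎)}. -/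
open scoped BoundedContinuousFunction
open OnePoint

noncomputable section

namespace CK

/-- The `i`-th row of `A` as an integer-valued function. -/
def rhoZ {G : Type*} (A : G → G → Bool) (i : G) : G → ℤ := fun j => if A i j then 1 else 0

/-- The `i`-th row of the identity matrix as an integer-valued function. -/
def delZ {G : Type*} [DecidableEq G] (i : G) : G → ℤ := fun j => if j = i then 1 else 0

/-- The generators of the ring `𝔯_A`. -/
def gensZ {G : Type*} [DecidableEq G] (A : G → G → Bool) : Set (G → ℤ) :=
  Set.range (rhoZ A) ∪ Set.range (delZ (G := G))

/-- `𝔯_A`, the (non-unital) subring of `ℤ^G` generated by the rows of `A` and of the identity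
matrix. -/
def frakRA {G : Type*} [DecidableEq G] (A : G → G → Bool) : NonUnitalSubring (G → ℤ) :=
  NonUnitalSubring.closure (gensZ A)

/-- `𝔯̃_A`, the subring of `ℤ^G` generated by `𝔯_A` together with the constant function `1`. -/
def frakRtA {G : Type*} [DecidableEq G] (A : G → G → Bool) : Subring (G → ℤ) :=
  Subring.closure (gensZ A)

end CK

/-!
`Γ̃_A` is a compact subspace of `G̃ × {0,1}^G`, and the `{0,1}`-valued continuous functions
`p ↦ p.2 i` and `p ↦ [p.1 = i]` separate its points. On a compact space `X`, a subring of
`C(X, ℤ)` containing, for all `p ≠ q`, some `e` with `e p = 1` and `e q = 0` is everything: by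
compactness, finite products `∏ e` and finite expressions `1 - ∏ (1 - e)` of such functions give
the indicator of every clopen set, and a continuous integer-valued function is a finite integer
combination of the indicators of its fibres. Restriction to the dense set of points `(j, c_j)` is
injective and sends those generators to the rows `ρ_i` and `δ_i`, so `𝔯̃_A` is the image of
`C(Γ̃_A; ℤ)`. For `𝔯_A`, write an element of the unital closure as `n + x` with `x` in the
non-unital closure. If `(⋆, 𝟎) ∈ Γ̃_A`, every generator vanishes there and evaluating gives
`n = 0`. Otherwise the generators have no common zero, and the same compactness argument puts `1`
in the non-unital closure.
-/

theorem NonUnitalSubring.one_sub_prod_one_sub_mem {R ι : Type*} [CommRing R]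
    (S : NonUnitalSubring R) (t : Finset ι) {e : ι → R} (he : ∀ i ∈ t, e i ∈ S) :
    1 - ∏ i ∈ t, (1 - e i) ∈ S := by
  classical
  induction t using Finset.induction_on with
  | empty => simp
  | insert a t ha ih =>
    obtain ⟨hea, het⟩ := Finset.forall_mem_insert _ _ _ |>.mp he
    have hP := ih het
    rw [Finset.prod_insert ha,
      show 1 - (1 - e a) * ∏ i ∈ t, (1 - e i)
        = (1 - ∏ i ∈ t, (1 - e i)) + e a - e a * (1 - ∏ i ∈ t, (1 - e i)) by ring]
    exact sub_mem (add_mem hP hea) (mul_mem hea hP)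

theorem Subring.exists_sub_intCast_mem_of_mem_closure {R : Type*} [Ring R] {s : Set R} {x : R}
    (hx : x ∈ Subring.closure s) : ∃ n : ℤ, x - n ∈ NonUnitalSubring.closure s := by
  have : x ∈ (NonUnitalSubring.unitization (NonUnitalSubring.closure s)).range := by
    rw [NonUnitalSubring.unitization_range]
    exact Subring.closure_mono NonUnitalSubring.subset_closure hx
  obtain ⟨u, rfl⟩ := this
  exact ⟨u.fst, by simp⟩

namespace ContinuousMap

variable {X : Type*} [TopologicalSpace X]

theorem forall_exists_intCast_and_iff (P : X → Prop) (f : C(X, ℂ)) :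
    ((∀ p, ∃ n : ℤ, f p = n) ∧ ∀ p, P p → f p = 0) ↔
      ∃ g : C(X, ℤ), (∀ p, P p → g p = 0) ∧ ∀ p, f p = g p := by
  refine ⟨fun ⟨hf, hP⟩ => ?_,
    fun ⟨g, hP, hg⟩ => ⟨fun p => ⟨g p, hg p⟩, fun p hp => ?_⟩⟩
  · choose g hg using hf
    refine ⟨⟨g, Complex.isometry_intCast.comp_continuous_iff.mp ?_⟩, fun p hp => ?_, hg⟩
    · simpa only [Function.comp_def, ← hg] using f.continuous
    · exact_mod_cast (hg p).symm.trans (hP p hp)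
  · rw [hg p, hP p hp, Int.cast_zero]

theorem exists_mem_eq_one_and_eq_zero_on {R : Subring C(X, ℤ)} {C : Set X} (hC : IsCompact C)
    {p : X} (h : ∀ q ∈ C, ∃ e ∈ R, e p = 1 ∧ e q = 0) :
    ∃ e ∈ R, e p = 1 ∧ ∀ x ∈ C, e x = 0 := by
  choose! e heR hep heq using h
  obtain ⟨t, htC, hcover⟩ := hC.elim_nhds_subcover (fun q => {x | e q x = 0})
    fun q hq => ((isOpen_discrete {0}).preimage (e q).continuous).mem_nhds (heq q hq)
  refine ⟨∏ q ∈ t, e q, prod_mem fun q hq => heR q (htC q hq), ?_, fun x hx => ?_⟩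
  · rw [prod_apply]
    exact Finset.prod_eq_one fun q hq => hep q (htC q hq)
  · obtain ⟨q, hqt, hxq⟩ := Set.mem_iUnion₂.mp (hcover hx)
    rw [prod_apply]
    exact Finset.prod_eq_zero hqt hxq

theorem exists_mem_eq_one_on_and_eq_zero_off {S : NonUnitalSubring C(X, ℤ)} {K U : Set X}
    (hK : IsCompact K) (h : ∀ p ∈ K, ∃ e ∈ S, e p = 1 ∧ ∀ x ∉ U, e x = 0) :
    ∃ e ∈ S, (∀ x ∈ K, e x = 1) ∧ ∀ x ∉ U, e x = 0 := by
  choose! e heS hep heU using h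
  obtain ⟨t, htK, hcover⟩ := hK.elim_nhds_subcover (fun p => {x | e p x = 1})
    fun p hp => ((isOpen_discrete {1}).preimage (e p).continuous).mem_nhds (hep p hp)
  refine ⟨1 - ∏ p ∈ t, (1 - e p),
    S.one_sub_prod_one_sub_mem t fun p hp => heS p (htK p hp), fun x hx => ?_, fun x hx => ?_⟩
  · obtain ⟨p, hpt, hxp⟩ := Set.mem_iUnion₂.mp (hcover hx)
    rw [sub_apply, prod_apply,
      Finset.prod_eq_zero hpt (by simp [show e p x = 1 from hxp]), sub_zero, one_apply]
  · rw [sub_apply, prod_apply,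
      Finset.prod_eq_one fun p hp => by simp [heU p (htK p hp) x hx], one_apply, sub_self]

variable [CompactSpace X]

theorem exists_mem_coe_eq_indicator {R : Subring C(X, ℤ)}
    (hsep : ∀ p q, p ≠ q → ∃ e ∈ R, e p = 1 ∧ e q = 0) {K : Set X} (hK : IsClopen K) :
    ∃ e ∈ R, ⇑e = K.indicator 1 := by
  obtain ⟨e, heR, he1, he0⟩ := exists_mem_eq_one_on_and_eq_zero_off (S := R.toNonUnitalSubring)
    hK.isClosed.isCompact fun p hp => exists_mem_eq_one_and_eq_zero_on
      hK.isOpen.isClosed_compl.isCompact fun q hq => hsep p q (ne_of_mem_of_not_mem hp hq)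
  refine ⟨e, heR, funext fun x => ?_⟩
  by_cases hx : x ∈ K
  · simp [hx, he1 x hx]
  · simp [hx, he0 x hx]

theorem _root_.Subring.eq_top_of_separates {R : Subring C(X, ℤ)}
    (hsep : ∀ p q, p ≠ q → ∃ e ∈ R, e p = 1 ∧ e q = 0) : R = ⊤ := by
  refine eq_top_iff.mpr fun f _ => ?_
  have hfin : (Set.range f).Finite := (isCompact_range f.continuous).finite_of_discrete
  choose e heR he using fun n : ℤ =>
    exists_mem_coe_eq_indicator hsep ((isClopen_discrete {n}).preimage f.continuous)
  have hf : f = ∑ n ∈ hfin.toFinset, n • e n := by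
    ext x
    rw [sum_apply, Finset.sum_eq_single (f x)]
    · simp [he]
    · intro n _ hn
      simp [he, Ne.symm hn]
    · simp
  rw [hf]
  exact sum_mem fun n _ => zsmul_mem (heR n) n

end ContinuousMap

namespace CK

open Set

variable {G : Type*} [TopologicalSpace G] (A : G → G → Bool)

def colPoint (j : G) : GammaT A := ⟨(j, col A j), subset_closure ⟨j, rfl⟩⟩

theorem denseRange_colPoint : DenseRange (colPoint A) := by
  refine Subtype.dense_iff.mpr (closure_mono ?_)
  rintro _ ⟨j, rfl⟩
  exact ⟨colPoint A j, ⟨j, rfl⟩, rfl⟩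

def rhoCont (i : G) : C(GammaT A, ℤ) :=
  LocallyConstant.charFn ℤ <| (isClopen_discrete {true}).preimage
    (f := fun p : GammaT A => (p : OnePoint G × (G → Bool)).2 i) (by fun_prop)

theorem rhoCont_eq_one_iff (i : G) (p : GammaT A) :
    rhoCont A i p = 1 ↔ (p : OnePoint G × (G → Bool)).2 i = true := by
  simp [rhoCont, LocallyConstant.charFn_eq_one]

theorem rhoCont_eq_zero_iff (i : G) (p : GammaT A) :
    rhoCont A i p = 0 ↔ (p : OnePoint G × (G → Bool)).2 i = false := by
  simp [rhoCont, LocallyConstant.charFn_eq_zero]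

def PhiZ : C(GammaT A, ℤ) →+* (G → ℤ) :=
  RingHom.pi fun j => (Pi.evalRingHom _ (colPoint A j)).comp ContinuousMap.coeFnRingHom

theorem PhiZ_apply (f : C(GammaT A, ℤ)) (j : G) : PhiZ A f j = f (colPoint A j) := rfl

theorem PhiZ_rhoCont (i : G) : PhiZ A (rhoCont A i) = rhoZ A i := by
  funext j
  by_cases h : A i j <;> simp [PhiZ_apply, rhoZ, rhoCont_eq_one_iff, rhoCont_eq_zero_iff, h,
    colPoint, col]

variable [DiscreteTopology G]

theorem Phi_injective : Function.Injective (Phi A) := fun f g hfg =>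
  ContinuousMap.coe_injective <| (denseRange_colPoint A).equalizer f.continuous g.continuous <|
    funext fun j => DFunLike.congr_fun hfg j

def delCont (i : G) : C(GammaT A, ℤ) :=
  LocallyConstant.charFn ℤ <| (OnePoint.isClopen_singleton_coe i).preimage
    (f := fun p : GammaT A => (p : OnePoint G × (G → Bool)).1) (by fun_prop)

theorem delCont_eq_one_iff (i : G) (p : GammaT A) :
    delCont A i p = 1 ↔ (p : OnePoint G × (G → Bool)).1 = i := by
  simp [delCont, LocallyConstant.charFn_eq_one]

theorem delCont_eq_zero_iff (i : G) (p : GammaT A) :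
    delCont A i p = 0 ↔ (p : OnePoint G × (G → Bool)).1 ≠ i := by
  simp [delCont, LocallyConstant.charFn_eq_zero]

def gensCont : Set C(GammaT A, ℤ) := range (rhoCont A) ∪ range (delCont A)

theorem exists_gensCont_separating {p q : GammaT A} (hpq : p ≠ q) :
    ∃ g ∈ gensCont A, g p = 1 ∧ g q = 0 ∨ g p = 0 ∧ g q = 1 := by
  obtain ⟨⟨x, u⟩, hp⟩ := p
  obtain ⟨⟨y, v⟩, hq⟩ := q
  by_cases hxy : x = y
  · obtain ⟨i, hi⟩ := Function.ne_iff.mp fun huv : u = v => hpq (by subst hxy huv; rfl)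
    refine ⟨rhoCont A i, .inl ⟨i, rfl⟩, ?_⟩
    simp only [rhoCont_eq_one_iff, rhoCont_eq_zero_iff]
    cases hu : u i <;> cases hv : v i <;> simp_all
  · cases x with
    | infty =>
      cases y with
      | infty => exact absurd rfl hxy
      | coe j =>
        refine ⟨delCont A j, .inr ⟨j, rfl⟩, .inr ?_⟩
        simp [delCont_eq_one_iff, delCont_eq_zero_iff]
    | coe i =>
      refine ⟨delCont A i, .inr ⟨i, rfl⟩, .inl ?_⟩
      simp [delCont_eq_one_iff, delCont_eq_zero_iff, Ne.symm hxy]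

theorem closure_gensCont_eq_top : Subring.closure (gensCont A) = ⊤ :=
  Subring.eq_top_of_separates fun p q hpq => by
    obtain ⟨g, hg, ⟨hp, hq⟩ | ⟨hp, hq⟩⟩ := exists_gensCont_separating A hpq
    · exact ⟨g, Subring.subset_closure hg, hp, hq⟩
    · exact ⟨1 - g, sub_mem (one_mem _) (Subring.subset_closure hg), by simp [hp],
        by simp [hq]⟩

theorem gensCont_apply_eq_zero {g : C(GammaT A, ℤ)} (hg : g ∈ gensCont A) {p : GammaT A}
    (hp : (p : OnePoint G × (G → Bool)) = (∞, fun _ => false)) : g p = 0 := by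
  rcases hg with ⟨i, rfl⟩ | ⟨i, rfl⟩
  · simp [rhoCont_eq_zero_iff, hp]
  · simp [delCont_eq_zero_iff, hp]

theorem exists_gensCont_apply_eq_one {p : GammaT A}
    (hp : (p : OnePoint G × (G → Bool)) ≠ (∞, fun _ => false)) :
    ∃ g ∈ gensCont A, g p = 1 := by
  obtain ⟨⟨x, u⟩, hmem⟩ := p
  cases x with
  | infty =>
    obtain ⟨i, hi⟩ : ∃ i, u i = true := by
      by_contra! h
      exact hp (by simpa [funext_iff] using h)
    exact ⟨rhoCont A i, .inl ⟨i, rfl⟩, (rhoCont_eq_one_iff A i _).mpr hi⟩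
  | coe j => exact ⟨delCont A j, .inr ⟨j, rfl⟩, (delCont_eq_one_iff A j _).mpr rfl⟩

theorem one_mem_nonUnitalClosure_gensCont
    (h : ∀ p : GammaT A, (p : OnePoint G × (G → Bool)) ≠ (∞, fun _ => false)) :
    1 ∈ NonUnitalSubring.closure (gensCont A) := by
  obtain ⟨e, he, he1, -⟩ := ContinuousMap.exists_mem_eq_one_on_and_eq_zero_off
    (K := univ) (U := univ) isCompact_univ fun p _ => by
      obtain ⟨g, hg, hgp⟩ := exists_gensCont_apply_eq_one A (h p)
      exact ⟨g, NonUnitalSubring.subset_closure hg, hgp, fun x hx => absurd (mem_univ x) hx⟩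
  convert he
  ext x
  exact (he1 x (mem_univ x)).symm

theorem apply_eq_zero_of_mem_nonUnitalClosure_gensCont {f : C(GammaT A, ℤ)}
    (hf : f ∈ NonUnitalSubring.closure (gensCont A)) {p : GammaT A}
    (hp : (p : OnePoint G × (G → Bool)) = (∞, fun _ => false)) : f p = 0 := by
  induction hf using NonUnitalSubring.closure_induction with
  | mem g hg => exact gensCont_apply_eq_zero A hg hp
  | zero => rfl
  | add _ _ _ _ hf hg => simp [hf, hg]
  | neg _ _ hf => simp [hf]
  | mul _ _ _ _ hf hg => simp [hf, hg]

theorem mem_nonUnitalClosure_gensCont_iff {f : C(GammaT A, ℤ)} :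
    f ∈ NonUnitalSubring.closure (gensCont A) ↔
      ∀ p : GammaT A, (p : OnePoint G × (G → Bool)) = (∞, fun _ => false) → f p = 0 := by
  refine ⟨fun hf p hp => apply_eq_zero_of_mem_nonUnitalClosure_gensCont A hf hp, fun hf => ?_⟩
  obtain ⟨n, hn⟩ := Subring.exists_sub_intCast_mem_of_mem_closure
    ((closure_gensCont_eq_top A).symm ▸ Subring.mem_top f)
  by_cases h0 : ∃ p : GammaT A, (p : OnePoint G × (G → Bool)) = (∞, fun _ => false)
  · obtain ⟨p, hp⟩ := h0
    suffices n = 0 by simpa [this] using hn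
    simpa [hf p hp] using apply_eq_zero_of_mem_nonUnitalClosure_gensCont A hn hp
  · push Not at h0
    simpa using add_mem hn (zsmul_mem (one_mem_nonUnitalClosure_gensCont A h0) n)

theorem image_Phi_of_forall_mem_iff {T : Set C(GammaT A, ℂ)} {S : Set C(GammaT A, ℤ)}
    (hTS : ∀ f, f ∈ T ↔ ∃ g ∈ S, ∀ p, f p = ((g p : ℤ) : ℂ)) :
    Phi A '' T = {φ | ∃ h ∈ PhiZ A '' S, ∀ j, φ j = ((h j : ℤ) : ℂ)} := by
  ext φ
  constructor
  · rintro ⟨f, hf, rfl⟩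
    obtain ⟨g, hg, hfg⟩ := (hTS f).mp hf
    exact ⟨PhiZ A g, mem_image_of_mem _ hg, fun j => hfg _⟩
  · rintro ⟨_, ⟨g, hg, rfl⟩, hφ⟩
    refine ⟨⟨fun p => g p, continuous_of_discreteTopology.comp g.continuous⟩,
      (hTS _).mpr ⟨g, hg, fun _ => rfl⟩, ?_⟩
    ext j
    exact (hφ j).symm

variable [DecidableEq G]

theorem PhiZ_delCont (i : G) : PhiZ A (delCont A i) = delZ i := by
  funext j
  by_cases h : j = i <;> simp [PhiZ_apply, delZ, delCont_eq_one_iff, delCont_eq_zero_iff, h,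
    colPoint]

theorem image_PhiZ_gensCont : PhiZ A '' gensCont A = gensZ A := by
  simp only [gensCont, gensZ, image_union, ← range_comp, Function.comp_def, PhiZ_rhoCont,
    PhiZ_delCont]

theorem coe_frakRtA : (frakRtA A : Set (G → ℤ)) = range (PhiZ A) := by
  rw [frakRtA, ← image_PhiZ_gensCont, ← RingHom.map_closure, closure_gensCont_eq_top,
    Subring.coe_map, Subring.coe_top, image_univ]

theorem coe_frakRA :
    (frakRA A : Set (G → ℤ)) = PhiZ A ''
      {f | ∀ p : GammaT A, p.1 = (∞, fun _ => false) → f p = 0} := by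
  ext h
  change h ∈ NonUnitalSubring.closure (gensZ A) ↔ _
  rw [← image_PhiZ_gensCont]
  change h ∈ NonUnitalSubring.closure
    ((PhiZ A : C(GammaT A, ℤ) →ₙ+* (G → ℤ)) '' gensCont A) ↔ _
  rw [← NonUnitalRingHom.map_closure, NonUnitalSubring.mem_map]
  simp only [mem_nonUnitalClosure_gensCont_iff]
  rfl

end CK

theorem stmt_10_general {G : Type*} [TopologicalSpace G] [DiscreteTopology G]
    [DecidableEq G] (A : G → G → Bool) :
    Set.InjOn (CK.Phi A) {f : C(CK.GammaT A, ℂ) | ∀ p, ∃ n : ℤ, f p = (n : ℂ)} ∧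
    CK.Phi A '' {f : C(CK.GammaT A, ℂ) | ∀ p, ∃ n : ℤ, f p = (n : ℂ)} =
      {g : G →ᵇ ℂ | ∃ h ∈ CK.frakRtA A, ∀ j : G, g j = ((h j : ℤ) : ℂ)} ∧
    CK.Phi A '' {f : C(CK.GammaT A, ℂ) |
        (∀ p, ∃ n : ℤ, f p = (n : ℂ)) ∧
        ∀ p : CK.GammaT A,
          (p : OnePoint G × (G → Bool)) = (∞, fun _ => false) → f p = 0} =
      {g : G →ᵇ ℂ | ∃ h ∈ CK.frakRA A, ∀ j : G, g j = ((h j : ℤ) : ℂ)} := by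
  refine ⟨(CK.Phi_injective A).injOn, ?_, ?_⟩
  · simp only [← SetLike.mem_coe]
    rw [CK.coe_frakRtA, ← Set.image_univ]
    exact CK.image_Phi_of_forall_mem_iff A fun f => by
      simpa using ContinuousMap.forall_exists_intCast_and_iff (fun _ => False) f
  · simp only [← SetLike.mem_coe]
    rw [CK.coe_frakRA]
    exact CK.image_Phi_of_forall_mem_iff A fun f =>
      ContinuousMap.forall_exists_intCast_and_iff _ f

/-- `Φ` restricts to a bijection from `C(Γ̃_A; ℤ)` onto (the copy in
`ℓ^∞(G)` of) `𝔯̃_A`, and from the integer-valued continuous functions vanishing at `(⋆, 𝟎)`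
onto `𝔯_A`; that is, `𝔯̃_A ≅ C(Γ̃_A; ℤ)` and `𝔯_A ≅ C₀(Γ_A; ℤ)`. -/
theorem stmt_10 {G : Type*} [Nonempty G] [TopologicalSpace G] [DiscreteTopology G]
    [DecidableEq G] (A : G → G → Bool) (hA : ∀ i : G, ∃ j : G, A i j = true) :
    Set.InjOn (CK.Phi A) {f : C(CK.GammaT A, ℂ) | ∀ p, ∃ n : ℤ, f p = (n : ℂ)} ∧
    CK.Phi A '' {f : C(CK.GammaT A, ℂ) | ∀ p, ∃ n : ℤ, f p = (n : ℂ)} =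
      {g : G →ᵇ ℂ | ∃ h ∈ CK.frakRtA A, ∀ j : G, g j = ((h j : ℤ) : ℂ)} ∧
    CK.Phi A '' {f : C(CK.GammaT A, ℂ) |
        (∀ p, ∃ n : ℤ, f p = (n : ℂ)) ∧
        ∀ p : CK.GammaT A,
          (p : OnePoint G × (G → Bool)) = (∞, fun _ => false) → f p = 0} =
      {g : G →ᵇ ℂ | ∃ h ∈ CK.frakRA A, ∀ j : G, g j = ((h j : ℤ) : ℂ)} :=
  stmt_10_general A
end
end
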